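/- arXiv:2209.03587 — 4 statements merged into one kernel-verified Lean document; each statement's English description precedes it below -/
import Mathlib

section
/- Let X be a complete separable metric space. For i = 0,1 let ν_i^n, ν_i be Borel probability measures on X with ν_i^n → ν_i weakly, let π^n be a coupling of ν_0^n and ν_1^n converging weakly to a coupling π of ν_0 and ν_1, let φ : X × X → ℝ be bounded continuous, and let f_i ∈ L¹(X, ν_i) be Borel functions. Suppose there exists C > 0 such that ν_i^n ≤ C·ν_i (as measures) for all n and i = 0,1. Then for i = 0,1: limsup_{n→∞} ∫_{X×X} φ(x₀,x₁)·f_i(x_i) dπ^n(x₀,x₁) ≤ ∫_{X×X} φ(x₀,x₁)·f_i(x_i) dπ(x₀,x₁). -/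
/-- A bundled mm-space: a complete separable metric space with a Borel probability measure. -/
structure MMSpace where
  X : Type
  [metric : MetricSpace X]
  [cpl : CompleteSpace X]
  [sep : TopologicalSpace.SeparableSpace X]
  [mble : MeasurableSpace X]
  [borel : BorelSpace X]
  μ : MeasureTheory.Measure X
  [prob : MeasureTheory.IsProbabilityMeasure μ]

attribute [instance] MMSpace.metric MMSpace.cpl MMSpace.sep MMSpace.mble MMSpace.borel MMSpace.prob

open MeasureTheory ENNReal Filter Topology Set

noncomputable section

/-- A coupling of two measures on `X` is a measure on `X × X` whose marginals are the
given measures. -/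
def IsCoupling {X : Type*} [MeasurableSpace X] (π : Measure (X × X)) (μ ν : Measure X) : Prop :=
  π.map Prod.fst = μ ∧ π.map Prod.snd = ν

/-- A measure has finite second moment if `∫ d(x,x₀)² dμ < ∞` for some base point. -/
def HasFiniteSecondMoment {X : Type*} [PseudoMetricSpace X] [MeasurableSpace X]
    (μ : Measure X) : Prop :=
  ∃ x₀ : X, ∫⁻ x, ENNReal.ofReal (dist x x₀) ^ 2 ∂μ < ∞

/-- The square-root of the quadratic transport cost of a coupling. -/
def cost2 {X : Type*} [PseudoMetricSpace X] [MeasurableSpace X] (π : Measure (X × X)) : ℝ≥0∞ :=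
  (∫⁻ p, ENNReal.ofReal (dist p.1 p.2) ^ 2 ∂π) ^ (1 / 2 : ℝ)

/-- The 2-Wasserstein distance (valued in `[0,∞]`). -/
def W2 {X : Type*} [PseudoMetricSpace X] [MeasurableSpace X] (μ ν : Measure X) : ℝ≥0∞ :=
  ⨅ (π : Measure (X × X)) (_ : IsCoupling π μ ν), cost2 π

/-- A coupling is optimal if it attains the 2-Wasserstein distance. -/
def IsOptimalCoupling {X : Type*} [PseudoMetricSpace X] [MeasurableSpace X]
    (π : Measure (X × X)) (μ ν : Measure X) : Prop :=
  IsCoupling π μ ν ∧ cost2 π = W2 μ ν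

open Classical in
/-- The Rényi entropy `S_{N',μ}(ν) = ∫ ρ^{1-1/N'} dμ` if `ν = ρμ ≪ μ`, and `∞` otherwise. -/
def renyiEntropy {X : Type*} [MeasurableSpace X] (N' : ℝ) (μ ν : Measure X) : ℝ≥0∞ :=
  if ν ≪ μ then ∫⁻ x, (ν.rnDeriv μ x) ^ (1 - 1 / N') ∂μ else ∞

/-- Weak convergence of a sequence of measures: convergence of integrals of all bounded
continuous functions. -/
def WeakConv {X : Type*} [TopologicalSpace X] [MeasurableSpace X]
    (μs : ℕ → Measure X) (μ : Measure X) : Prop :=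
  ∀ f : BoundedContinuousFunction X ℝ,
    Tendsto (fun n => ∫ x, f x ∂(μs n)) atTop (𝓝 (∫ x, f x ∂μ))

/-- Tightness of a sequence of measures. -/
def IsTightSeq {X : Type*} [TopologicalSpace X] [MeasurableSpace X]
    (μs : ℕ → Measure X) : Prop :=
  ∀ ε : ℝ, 0 < ε → ∃ K : Set X, IsCompact K ∧ ∀ n, μs n Kᶜ < ENNReal.ofReal ε

/-- The function `s_κ`, with the convention `s_κ(0) = 1`. -/
def sKappa (κ θ : ℝ) : ℝ :=
  if θ = 0 then 1
  else if 0 < κ then Real.sin (Real.sqrt κ * θ) / (Real.sqrt κ * θ)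
  else if κ < 0 then Real.sinh (Real.sqrt (-κ) * θ) / (Real.sqrt (-κ) * θ)
  else 1

/-- `ω_κ = π/√κ` for `κ > 0` and `∞` otherwise. -/
def omegaKappa (κ : ℝ) : ℝ≥0∞ :=
  if 0 < κ then ENNReal.ofReal (Real.pi / Real.sqrt κ) else ∞

/-- The coefficient `τ_{K,N}^{(t)}(θ)`, valued in `[0,∞]`. -/
def tauCoeff (K N t θ : ℝ) : ℝ≥0∞ :=
  if ENNReal.ofReal θ < omegaKappa (K / (N - 1)) then
    ENNReal.ofReal (t * (sKappa (K / (N - 1)) (t * θ) / sKappa (K / (N - 1)) θ) ^ (1 - 1 / N))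
  else ∞

/-- The coefficient `σ_κ^{(t)}(θ)`, valued in `[0,∞]`. -/
def sigmaCoeff (κ t θ : ℝ) : ℝ≥0∞ :=
  if ENNReal.ofReal θ < omegaKappa κ then
    ENNReal.ofReal (t * sKappa κ (t * θ) / sKappa κ θ)
  else ∞

/-- The curvature-dimension condition `CD(K,N)` for `N < 0`, for a (probability) measure on a
metric space. -/
def IsCDSpace {X : Type*} [MetricSpace X] [MeasurableSpace X] (K N : ℝ) (μX : Measure X) : Prop :=
  ∀ ν₀ ν₁ : Measure X, IsProbabilityMeasure ν₀ → IsProbabilityMeasure ν₁ →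
    ν₀ ≪ μX → ν₁ ≪ μX →
    HasFiniteSecondMoment ν₀ → HasFiniteSecondMoment ν₁ →
    renyiEntropy N μX ν₀ < ∞ → renyiEntropy N μX ν₁ < ∞ →
    ∃ (νt : ℝ → Measure X) (π : Measure (X × X)),
      νt 0 = ν₀ ∧ νt 1 = ν₁ ∧
      (∀ s ∈ Icc (0:ℝ) 1, ∀ t ∈ Icc (0:ℝ) 1,
        W2 (νt s) (νt t) = ENNReal.ofReal |s - t| * W2 ν₀ ν₁) ∧
      IsOptimalCoupling π ν₀ ν₁ ∧
      (∀ t ∈ Icc (0:ℝ) 1, ∀ N' ∈ Ico N (0:ℝ),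
        renyiEntropy N' μX ν₀ < ∞ → renyiEntropy N' μX ν₁ < ∞ →
        renyiEntropy N' μX (νt t) ≤
          (∫⁻ p, tauCoeff K N' (1 - t) (dist p.1 p.2) * (ν₀.rnDeriv μX p.1) ^ (-(1 / N')) ∂π)
          + ∫⁻ p, tauCoeff K N' t (dist p.1 p.2) * (ν₁.rnDeriv μX p.2) ^ (-(1 / N')) ∂π)

/-- The reduced curvature-dimension condition `CD*(K,N)` for `N < 0`. -/
def IsCDStarSpace {X : Type*} [MetricSpace X] [MeasurableSpace X] (K N : ℝ)
    (μX : Measure X) : Prop :=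
  ∀ ν₀ ν₁ : Measure X, IsProbabilityMeasure ν₀ → IsProbabilityMeasure ν₁ →
    ν₀ ≪ μX → ν₁ ≪ μX →
    HasFiniteSecondMoment ν₀ → HasFiniteSecondMoment ν₁ →
    renyiEntropy N μX ν₀ < ∞ → renyiEntropy N μX ν₁ < ∞ →
    ∃ (νt : ℝ → Measure X) (π : Measure (X × X)),
      νt 0 = ν₀ ∧ νt 1 = ν₁ ∧
      (∀ s ∈ Icc (0:ℝ) 1, ∀ t ∈ Icc (0:ℝ) 1,
        W2 (νt s) (νt t) = ENNReal.ofReal |s - t| * W2 ν₀ ν₁) ∧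
      IsOptimalCoupling π ν₀ ν₁ ∧
      (∀ t ∈ Icc (0:ℝ) 1, ∀ N' ∈ Ico N (0:ℝ),
        renyiEntropy N' μX ν₀ < ∞ → renyiEntropy N' μX ν₁ < ∞ →
        renyiEntropy N' μX (νt t) ≤
          (∫⁻ p, sigmaCoeff (K / N') (1 - t) (dist p.1 p.2)
              * (ν₀.rnDeriv μX p.1) ^ (-(1 / N')) ∂π)
          + ∫⁻ p, sigmaCoeff (K / N') t (dist p.1 p.2)
              * (ν₁.rnDeriv μX p.2) ^ (-(1 / N')) ∂π)

/-- The conditioned (normalized restricted) measure `ν_B`. -/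
def condProb {X : Type*} [MeasurableSpace X] (ν : Measure X) (B : Set X) : Measure X :=
  (ν B)⁻¹ • ν.restrict B

/-- Inverse hyperbolic cosine, `arcosh x = log (x + √(x²-1))`. -/
def acosh (x : ℝ) : ℝ := Real.log (x + Real.sqrt (x ^ 2 - 1))

/-- A parameter of an mm-space: a Borel map `[0,1) → X` pushing the Lebesgue measure to `μ`. -/
def IsParameter (A : MMSpace) (φ : ℝ → A.X) : Prop :=
  Measurable φ ∧ Measure.map φ (volume.restrict (Ico (0:ℝ) 1)) = A.μ

/-- The Ky Fan distance between two measurable functions on `[0,1)`. -/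
def kyFan (f g : ℝ → ℝ) : ℝ :=
  sInf {ε : ℝ | 0 ≤ ε ∧
    (volume.restrict (Ico (0:ℝ) 1)) {x | ε < |f x - g x|} ≤ ENNReal.ofReal ε}

/-- The pullback of the 1-Lipschitz functions on an mm-space by a parameter. -/
def pullLip (A : MMSpace) (φ : ℝ → A.X) : Set (ℝ → ℝ) :=
  {h | ∃ f : A.X → ℝ, LipschitzWith 1 f ∧ h = f ∘ φ}

/-- The Hausdorff distance between two sets of functions with respect to the Ky Fan metric. -/
def hausdorffKF (A B : Set (ℝ → ℝ)) : ℝ :=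
  max (⨆ f ∈ A, ⨅ g ∈ B, kyFan f g) (⨆ g ∈ B, ⨅ f ∈ A, kyFan f g)

/-- The observable distance between two mm-spaces. -/
def dconc (A B : MMSpace) : ℝ :=
  sInf {r : ℝ | ∃ φ ψ, IsParameter A φ ∧ IsParameter B ψ ∧
    r = hausdorffKF (pullLip A φ) (pullLip B ψ)}

end

noncomputable section

/-- The smooth approximation `F_a(x) = a⁻¹ log(e^{ax} + e^{-ax})` of `|x|`. -/
def Fa (a x : ℝ) : ℝ := a⁻¹ * Real.log (Real.exp (a * x) + Real.exp (-(a * x)))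

/-- A (minimizing, constant-speed) geodesic parametrized by `[0,1]`. -/
def IsGeodOn01 {X : Type*} [PseudoMetricSpace X] (γ : ℝ → X) : Prop :=
  ∀ s ∈ Set.Icc (0:ℝ) 1, ∀ s' ∈ Set.Icc (0:ℝ) 1,
    dist (γ s) (γ s') = |s - s'| * dist (γ 0) (γ 1)

end

/-!
Approximate `fᵢ` in `L¹(νᵢ)` by a bounded continuous `g`. The domination `νᵢⁿ ≤ C·νᵢ` makes the
error `‖φ‖ ∫ |fᵢ - g| dνᵢⁿ` small uniformly in `n`, while `∫ φ(x₀,x₁) g(xᵢ) dπⁿ` converges by weak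
convergence of the couplings. Hence the integrals in fact converge.
-/

lemma tendsto_of_forall_approx {α E : Type*} [PseudoMetricSpace E] {l : Filter α} {a : α → E}
    {L : E} (K : ℝ)
    (h : ∀ ε > 0, ∃ (b : α → E) (L' : E), Tendsto b l (𝓝 L') ∧
      (∀ᶠ x in l, dist (a x) (b x) ≤ K * ε) ∧ dist L' L ≤ K * ε) :
    Tendsto a l (𝓝 L) := by
  refine Metric.tendsto_nhds.2 fun ε hε => ?_
  obtain ⟨δ, hδ, hKδ⟩ := exists_pos_mul_lt (by positivity : 0 < ε / 3) K
  obtain ⟨b, L', hb, hab, hL⟩ := h δ hδ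
  filter_upwards [hab, Metric.tendsto_nhds.1 hb (ε / 3) (by positivity)] with x hx hbx
  calc dist (a x) L ≤ dist (a x) (b x) + dist (b x) L' + dist L' L := dist_triangle4 _ _ _ _
    _ < ε := by linarith

lemma integral_le_toReal_mul_of_le_smul {X : Type*} [MeasurableSpace X] {μ ν : Measure X}
    {c : ℝ≥0∞} (hc : c ≠ ∞) (hμν : μ ≤ c • ν) {g : X → ℝ} (hg0 : 0 ≤ g) (hg : Integrable g ν) :
    ∫ x, g x ∂μ ≤ c.toReal * ∫ x, g x ∂ν := by
  rw [← smul_eq_mul, ← integral_smul_measure]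
  exact integral_mono_measure hμν (ae_of_all _ hg0) (hg.smul_measure hc)

section CompIntegral

variable {X Y : Type*} [MeasurableSpace X] [TopologicalSpace Y] [MeasurableSpace Y]
  [OpensMeasurableSpace Y] {μ : Measure Y} {p : Y → X}

lemma integrable_bcf_mul_comp (φ : BoundedContinuousFunction Y ℝ) (hp : AEMeasurable p μ)
    {f : X → ℝ} (hf : Integrable f (μ.map p)) :
    Integrable (fun y => φ y * f (p y)) μ :=
  (hf.comp_aemeasurable hp).bdd_mul φ.continuous.aestronglyMeasurable
    (ae_of_all _ φ.norm_coe_le_norm)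

lemma dist_integral_bcf_mul_comp_le (φ : BoundedContinuousFunction Y ℝ) (hp : AEMeasurable p μ)
    {f g : X → ℝ} (hf : Integrable f (μ.map p)) (hg : Integrable g (μ.map p)) :
    dist (∫ y, φ y * f (p y) ∂μ) (∫ y, φ y * g (p y) ∂μ)
      ≤ ‖φ‖ * ∫ x, ‖f x - g x‖ ∂(μ.map p) := by
  rw [dist_eq_norm, ← integral_sub (integrable_bcf_mul_comp φ hp hf)
    (integrable_bcf_mul_comp φ hp hg)]
  calc ‖∫ y, φ y * f (p y) - φ y * g (p y) ∂μ‖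
      ≤ ∫ y, ‖φ‖ * ‖f (p y) - g (p y)‖ ∂μ := by
        refine norm_integral_le_of_norm_le
          (((hf.sub hg).norm.comp_aemeasurable hp).const_mul _) (ae_of_all _ fun y => ?_)
        rw [← mul_sub, norm_mul]
        gcongr
        exact φ.norm_coe_le_norm y
    _ = ‖φ‖ * ∫ x, ‖f x - g x‖ ∂(μ.map p) := by
        rw [integral_const_mul, integral_map (f := fun x => ‖f x - g x‖) hp
          (hf.sub hg).norm.aestronglyMeasurable]

end CompIntegral

theorem tendsto_integral_bcf_mul_comp_of_le_smul {X Y : Type*} [PseudoMetricSpace X]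
    [MeasurableSpace X] [BorelSpace X] [TopologicalSpace Y] [MeasurableSpace Y]
    [OpensMeasurableSpace Y] {πs : ℕ → Measure Y} {π : Measure Y} (hπw : WeakConv πs π)
    (φ : BoundedContinuousFunction Y ℝ) {p : Y → X} (hp : Continuous p)
    {νs : ℕ → Measure X} {ν : Measure X} [IsFiniteMeasure ν]
    (hνs : ∀ n, (πs n).map p = νs n) (hν : π.map p = ν)
    {c : ℝ≥0∞} (hc : c ≠ ∞) (hdom : ∀ n, νs n ≤ c • ν) {f : X → ℝ} (hf : Integrable f ν) :
    Tendsto (fun n => ∫ y, φ y * f (p y) ∂πs n) atTop (𝓝 (∫ y, φ y * f (p y) ∂π)) := by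
  have hpm : ∀ μ : Measure Y, AEMeasurable p μ := fun _ => hp.measurable.aemeasurable
  have hdom_int : ∀ {g : X → ℝ}, Integrable g ν → ∀ n, Integrable g (νs n) :=
    fun hg n => (hg.smul_measure hc).mono_measure (hdom n)
  refine tendsto_of_forall_approx (‖φ‖ * (c.toReal + 1)) fun ε hε => ?_
  obtain ⟨g, hfg, hg⟩ := hf.exists_boundedContinuous_integral_sub_le hε
  refine ⟨fun n => ∫ y, φ y * g (p y) ∂πs n, ∫ y, φ y * g (p y) ∂π,
    hπw (φ * g.compContinuous ⟨p, hp⟩), Eventually.of_forall fun n => ?_, ?_⟩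
  · calc dist (∫ y, φ y * f (p y) ∂πs n) (∫ y, φ y * g (p y) ∂πs n)
        ≤ ‖φ‖ * ∫ x, ‖f x - g x‖ ∂νs n := by
          rw [← hνs n]
          exact dist_integral_bcf_mul_comp_le φ (hpm _) (hνs n ▸ hdom_int hf n)
            (hνs n ▸ hdom_int hg n)
      _ ≤ ‖φ‖ * (c.toReal * ε) := by
          gcongr
          exact (integral_le_toReal_mul_of_le_smul hc (hdom n) (fun _ => norm_nonneg _)
            (hf.sub hg).norm).trans
              (mul_le_mul_of_nonneg_left hfg ENNReal.toReal_nonneg)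
      _ ≤ ‖φ‖ * (c.toReal + 1) * ε := by
          rw [mul_assoc]
          gcongr
          linarith
  · calc dist (∫ y, φ y * g (p y) ∂π) (∫ y, φ y * f (p y) ∂π)
        ≤ ‖φ‖ * ∫ x, ‖f x - g x‖ ∂ν := by
          rw [dist_comm, ← hν]
          exact dist_integral_bcf_mul_comp_le φ (hpm _) (hν ▸ hf) (hν ▸ hg)
      _ ≤ ‖φ‖ * (c.toReal + 1) * ε := by
          have : 0 ≤ ‖φ‖ * c.toReal * ε := by positivity
          nlinarith [norm_nonneg φ]

open MeasureTheory Filter Set in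
theorem integral_limsup_of_dominated_general {X : Type*} [MetricSpace X]
    [TopologicalSpace.SeparableSpace X] [MeasurableSpace X] [BorelSpace X]
    (ν0s ν1s : ℕ → Measure X) (ν0 ν1 : Measure X)
    [IsProbabilityMeasure ν0] [IsProbabilityMeasure ν1]
    (πs : ℕ → Measure (X × X)) (π : Measure (X × X))
    (hπs : ∀ n, IsCoupling (πs n) (ν0s n) (ν1s n)) (hπ : IsCoupling π ν0 ν1)
    (hπw : WeakConv πs π)
    (φ : BoundedContinuousFunction (X × X) ℝ)
    (f0 f1 : X → ℝ)
    (hf0 : Integrable f0 ν0) (hf1 : Integrable f1 ν1)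
    (C : ℝ)
    (hdom0 : ∀ n, ν0s n ≤ ENNReal.ofReal C • ν0)
    (hdom1 : ∀ n, ν1s n ≤ ENNReal.ofReal C • ν1) :
    (limsup (fun n => ∫ p, φ p * f0 p.1 ∂(πs n)) atTop ≤ ∫ p, φ p * f0 p.1 ∂π) ∧
    (limsup (fun n => ∫ p, φ p * f1 p.2 ∂(πs n)) atTop ≤ ∫ p, φ p * f1 p.2 ∂π) :=
  ⟨(tendsto_integral_bcf_mul_comp_of_le_smul hπw φ continuous_fst (fun n => (hπs n).1) hπ.1
      ENNReal.ofReal_ne_top hdom0 hf0).limsup_eq.le,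
    (tendsto_integral_bcf_mul_comp_of_le_smul hπw φ continuous_snd (fun n => (hπs n).2) hπ.2
      ENNReal.ofReal_ne_top hdom1 hf1).limsup_eq.le⟩

open MeasureTheory Filter Set in
/-- Upper semicontinuity of integrals `∫ φ(x₀,x₁) fᵢ(xᵢ) dπⁿ` along weakly
convergent couplings, under the domination condition `νᵢⁿ ≤ C·νᵢ`. -/
theorem integral_limsup_of_dominated {X : Type*} [MetricSpace X] [CompleteSpace X]
    [TopologicalSpace.SeparableSpace X] [MeasurableSpace X] [BorelSpace X]
    (ν0s ν1s : ℕ → Measure X) (ν0 ν1 : Measure X)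
    (hp0 : ∀ n, IsProbabilityMeasure (ν0s n)) (hp1 : ∀ n, IsProbabilityMeasure (ν1s n))
    [IsProbabilityMeasure ν0] [IsProbabilityMeasure ν1]
    (hw0 : WeakConv ν0s ν0) (hw1 : WeakConv ν1s ν1)
    (πs : ℕ → Measure (X × X)) (π : Measure (X × X))
    (hπs : ∀ n, IsCoupling (πs n) (ν0s n) (ν1s n)) (hπ : IsCoupling π ν0 ν1)
    (hπw : WeakConv πs π)
    (φ : BoundedContinuousFunction (X × X) ℝ)
    (f0 f1 : X → ℝ) (hf0m : Measurable f0) (hf1m : Measurable f1)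
    (hf0 : Integrable f0 ν0) (hf1 : Integrable f1 ν1)
    (C : ℝ) (hC : 0 < C)
    (hdom0 : ∀ n, ν0s n ≤ ENNReal.ofReal C • ν0)
    (hdom1 : ∀ n, ν1s n ≤ ENNReal.ofReal C • ν1) :
    (limsup (fun n => ∫ p, φ p * f0 p.1 ∂(πs n)) atTop ≤ ∫ p, φ p * f0 p.1 ∂π) ∧
    (limsup (fun n => ∫ p, φ p * f1 p.2 ∂(πs n)) atTop ≤ ∫ p, φ p * f1 p.2 ∂π) :=
  integral_limsup_of_dominated_general ν0s ν1s ν0 ν1 πs π hπs hπ hπw φ f0 f1 hf0 hf1 C hdom0 hdom1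
end

section
/- Let X = (X, d_X, μ_X) be an mm-space that is a CD(K,N) space for some K > 0 and N < 0. Then for all κ₀, κ₁ > 0 with κ₀ + κ₁ < 1 and all Borel sets A₀, A₁ ⊆ X with μ_X(A₀) ≥ κ₀ and μ_X(A₁) ≥ κ₁, one has dist(A₀, A₁) ≤ 2·√((1−N)/K)·arcosh( ((κ₀^{1/N} + κ₁^{1/N})/2)^{−N/(1−N)} ), where dist(A₀,A₁) := inf{d_X(x,y) : x ∈ A₀, y ∈ A₁} and arcosh(x) = log(x + √(x²−1)) for x ≥ 1. (Equivalently, the separation distance Sep(X; κ₀, κ₁) is bounded by this quantity.) -/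
open MeasureTheory ENNReal Filter Topology Set

/-! Condition `μ` on the two sets: `νᵢ = μ(Aᵢ)⁻¹ μ|Aᵢ` has density at most `μ(Aᵢ)⁻¹`. Apply the
`CD(K,N)` inequality at `t = 1/2` with `N' = N`. The left side `S_N(ν_{1/2})` is at least `1`
(Hölder, as `1 - 1/N > 1`), while `τ^{(1/2)}_{K,N}(θ) = (2 cosh(√(K/(1-N)) θ/2)^{1-1/N})⁻¹`
decreases in `θ`, so for `D` the distance between `A₀` and `A₁`,
`cosh(√(K/(1-N)) D/2)^{1-1/N} ≤ (μ(A₀)^{1/N} + μ(A₁)^{1/N})/2`, and inverting `cosh` gives the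
bound. Since the `CD` condition only concerns measures of finite second moment, the sets are first
cut down to bounded pieces of almost the same mass, and the bound is recovered in the limit. -/

section Measures

variable {Y : Type*} [MeasurableSpace Y]

lemma condProb_absolutelyContinuous (μ : Measure Y) (A : Set Y) : condProb μ A ≪ μ :=
  (Measure.absolutelyContinuous_of_le Measure.restrict_le_self).smul_left _

lemma isProbabilityMeasure_condProb {μ : Measure Y} [IsFiniteMeasure μ] {A : Set Y}
    (hA : μ A ≠ 0) : IsProbabilityMeasure (condProb μ A) :=
  ⟨by rw [condProb, Measure.smul_apply, Measure.restrict_apply_univ, smul_eq_mul,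
    ENNReal.inv_mul_cancel hA (measure_ne_top μ A)]⟩

lemma ae_mem_condProb (μ : Measure Y) {A : Set Y} (hA : MeasurableSet A) :
    ∀ᵐ x ∂condProb μ A, x ∈ A :=
  Measure.ae_smul_measure (ae_restrict_mem hA) _

lemma rnDeriv_condProb_le {μ : Measure Y} [IsFiniteMeasure μ] {A : Set Y}
    (hA : MeasurableSet A) (h0 : μ A ≠ 0) :
    ∀ᵐ x ∂μ, (condProb μ A).rnDeriv μ x ≤ (μ A)⁻¹ := by
  filter_upwards [Measure.rnDeriv_smul_left_of_ne_top (μ.restrict A) μ (ENNReal.inv_ne_top.2 h0),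
    Measure.rnDeriv_restrict_self μ hA] with x hsmul hrestrict
  rw [condProb, hsmul, Pi.smul_apply, hrestrict, smul_eq_mul]
  by_cases hx : x ∈ A <;> simp [hx]

lemma renyiEntropy_lt_top_of_rnDeriv_le {μ ν : Measure Y} [IsProbabilityMeasure μ] {c : ℝ≥0∞}
    (hν : ν ≪ μ) (hc : c ≠ ∞) (hle : ∀ᵐ x ∂μ, ν.rnDeriv μ x ≤ c) {N' : ℝ} (hN' : N' < 0) :
    renyiEntropy N' μ ν < ∞ := by
  have hp : 0 ≤ 1 - 1 / N' := by have := one_div_neg.2 hN'; linarith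
  rw [renyiEntropy, if_pos hν]
  calc ∫⁻ x, ν.rnDeriv μ x ^ (1 - 1 / N') ∂μ ≤ c ^ (1 - 1 / N') :=
        lintegral_le_const (hle.mono fun x hx ↦ ENNReal.rpow_le_rpow hx hp)
    _ < ∞ := ENNReal.rpow_lt_top_of_nonneg hp hc

lemma one_le_renyiEntropy {μ ν : Measure Y} [IsProbabilityMeasure μ] [IsProbabilityMeasure ν]
    {N' : ℝ} (hN' : N' < 0) : 1 ≤ renyiEntropy N' μ ν := by
  rcases em' (ν ≪ μ) with hν | hν
  · simp [renyiEntropy, hν]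
  rw [renyiEntropy, if_pos hν]
  set p := 1 - 1 / N'
  have hp : 1 < p := by have := one_div_neg.2 hN'; simp only [p]; linarith
  have hHolder := ENNReal.lintegral_mul_le_Lp_mul_Lq μ (Real.HolderConjugate.conjExponent hp)
    (Measure.measurable_rnDeriv ν μ).aemeasurable (aemeasurable_const (b := (1 : ℝ≥0∞)))
  simp only [Pi.mul_apply, mul_one, ENNReal.one_rpow, lintegral_const, measure_univ,
    Measure.lintegral_rnDeriv hν] at hHolder
  calc (1 : ℝ≥0∞) = 1 ^ p := (ENNReal.one_rpow p).symm
    _ ≤ ((∫⁻ x, ν.rnDeriv μ x ^ p ∂μ) ^ (1 / p)) ^ p := ENNReal.rpow_le_rpow hHolder (by linarith)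
    _ = ∫⁻ x, ν.rnDeriv μ x ^ p ∂μ := by
      rw [← ENNReal.rpow_mul, one_div_mul_cancel (by linarith), ENNReal.rpow_one]

lemma isCoupling_prod (ν₀ ν₁ : Measure Y) [IsProbabilityMeasure ν₀] [IsProbabilityMeasure ν₁] :
    IsCoupling (ν₀.prod ν₁) ν₀ ν₁ :=
  ⟨by rw [Measure.map_fst_prod, measure_univ, one_smul],
    by rw [Measure.map_snd_prod, measure_univ, one_smul]⟩

namespace IsCoupling

variable {π : Measure (Y × Y)} {ν₀ ν₁ : Measure Y}

lemma measure_univ_eq_left (h : IsCoupling π ν₀ ν₁) : π univ = ν₀ univ := by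
  rw [← h.1, Measure.map_apply measurable_fst MeasurableSet.univ, preimage_univ]

lemma measure_univ_eq_right (h : IsCoupling π ν₀ ν₁) : π univ = ν₁ univ := by
  rw [← h.2, Measure.map_apply measurable_snd MeasurableSet.univ, preimage_univ]

lemma ae_fst (h : IsCoupling π ν₀ ν₁) {P : Y → Prop} (hP : ∀ᵐ x ∂ν₀, P x) :
    ∀ᵐ p ∂π, P p.1 :=
  ae_of_ae_map measurable_fst.aemeasurable (h.1 ▸ hP)

lemma ae_snd (h : IsCoupling π ν₀ ν₁) {P : Y → Prop} (hP : ∀ᵐ x ∂ν₁, P x) :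
    ∀ᵐ p ∂π, P p.2 :=
  ae_of_ae_map measurable_snd.aemeasurable (h.2 ▸ hP)

end IsCoupling

end Measures

section Metric

variable {Y : Type*} [PseudoMetricSpace Y] [MeasurableSpace Y]

lemma hasFiniteSecondMoment_of_ae_mem_closedBall {ν : Measure Y} [IsProbabilityMeasure ν]
    {y₀ : Y} {R : ℝ} (h : ∀ᵐ y ∂ν, y ∈ Metric.closedBall y₀ R) : HasFiniteSecondMoment ν :=
  ⟨y₀, (lintegral_le_const (c := ENNReal.ofReal R ^ 2) (h.mono fun _ hy ↦ by
    gcongr; exact hy)).trans_lt (ENNReal.pow_lt_top ofReal_lt_top)⟩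

lemma W2_lt_top_of_ae_mem_closedBall {ν₀ ν₁ : Measure Y} [IsProbabilityMeasure ν₀]
    [IsProbabilityMeasure ν₁] {y₀ : Y} {R : ℝ} (h₀ : ∀ᵐ y ∂ν₀, y ∈ Metric.closedBall y₀ R)
    (h₁ : ∀ᵐ y ∂ν₁, y ∈ Metric.closedBall y₀ R) : W2 ν₀ ν₁ < ∞ := by
  have hprod := isCoupling_prod ν₀ ν₁
  have hdist : ∀ᵐ p ∂ν₀.prod ν₁,
      ENNReal.ofReal (dist p.1 p.2) ^ 2 ≤ ENNReal.ofReal (2 * R) ^ 2 := by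
    filter_upwards [hprod.ae_fst h₀, hprod.ae_snd h₁] with p hp₁ hp₂
    gcongr
    linarith [dist_triangle_right p.1 p.2 y₀, Metric.mem_closedBall.1 hp₁,
      Metric.mem_closedBall.1 hp₂]
  calc W2 ν₀ ν₁ ≤ cost2 (ν₀.prod ν₁) := by rw [W2]; exact iInf₂_le (ν₀.prod ν₁) hprod
    _ < ∞ := ENNReal.rpow_lt_top_of_nonneg (by norm_num)
      ((lintegral_le_const hdist).trans_lt (ENNReal.pow_lt_top ofReal_lt_top)).ne

lemma exists_isCoupling_of_W2_ne_top {ν₀ ν₁ : Measure Y} (h : W2 ν₀ ν₁ ≠ ∞) :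
    ∃ π, IsCoupling π ν₀ ν₁ := by
  by_contra! hπ
  exact h (iInf₂_eq_top.2 fun π hcoupling ↦ (hπ π hcoupling).elim)

lemma isProbabilityMeasure_of_W2_ne_top {ν₀ ν₁ : Measure Y} [IsProbabilityMeasure ν₀]
    (h : W2 ν₀ ν₁ ≠ ∞) : IsProbabilityMeasure ν₁ := by
  obtain ⟨γ, hγ⟩ := exists_isCoupling_of_W2_ne_top h
  exact ⟨by rw [← hγ.measure_univ_eq_right, hγ.measure_univ_eq_left, measure_univ]⟩

end Metric

open Real in
lemma sKappa_half_div_sKappa {κ θ : ℝ} (hκ : κ < 0) (hθ : 0 ≤ θ) :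
    sKappa κ (1 / 2 * θ) / sKappa κ θ = (cosh (√(-κ) * θ / 2))⁻¹ := by
  rcases hθ.eq_or_lt with rfl | hθ
  · simp [sKappa]
  have hsqrt : 0 < √(-κ) := sqrt_pos.2 (neg_pos.2 hκ)
  have hdouble : sinh (√(-κ) * θ) = 2 * sinh (√(-κ) * θ / 2) * cosh (√(-κ) * θ / 2) := by
    rw [← sinh_two_mul]; ring_nf
  simp only [sKappa, hθ.ne', (by positivity : 1 / 2 * θ ≠ 0), not_lt.2 hκ.le, hκ, if_false, if_true]
  rw [show √(-κ) * (1 / 2 * θ) = √(-κ) * θ / 2 by ring, hdouble]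
  field_simp

open Real in
lemma tauCoeff_half {K N θ : ℝ} (hK : 0 < K) (hN : N < 0) (hθ : 0 ≤ θ) :
    tauCoeff K N (1 / 2) θ =
      ENNReal.ofReal (2 * cosh (√(K / (1 - N)) * θ / 2) ^ (1 - 1 / N))⁻¹ := by
  have hκ : K / (N - 1) < 0 := div_neg_of_pos_of_neg hK (by linarith)
  have hneg : -(K / (N - 1)) = K / (1 - N) := by rw [← div_neg, neg_sub]
  rw [tauCoeff, omegaKappa, if_neg (not_lt.2 hκ.le), if_pos ofReal_lt_top,
    sKappa_half_div_sKappa hκ hθ, hneg, inv_rpow (cosh_pos _).le, mul_inv]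
  norm_num

open Real in
lemma tauCoeff_half_le {K N D θ : ℝ} (hK : 0 < K) (hN : N < 0) (hD : 0 ≤ D) (hθ : D ≤ θ) :
    tauCoeff K N (1 / 2) θ ≤
      ENNReal.ofReal (2 * cosh (√(K / (1 - N)) * D / 2) ^ (1 - 1 / N))⁻¹ := by
  have hθ0 := hD.trans hθ
  rw [tauCoeff_half hK hN hθ0]
  have hp : 0 ≤ 1 - 1 / N := by have := one_div_neg.2 hN; linarith
  gcongr ENNReal.ofReal (2 * ?_ ^ _)⁻¹
  rw [cosh_le_cosh, abs_of_nonneg (by positivity), abs_of_nonneg (by positivity)]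
  gcongr

lemma rpow_neg_one_div_le_of_le_inv {N r : ℝ} {g m : ℝ≥0∞} (hN : N < 0) (hr : 0 < r)
    (hm : ENNReal.ofReal r ≤ m) (hg : g ≤ m⁻¹) : g ^ (-(1 / N)) ≤ ENNReal.ofReal (r ^ (1 / N)) :=
  calc g ^ (-(1 / N)) ≤ (ENNReal.ofReal r)⁻¹ ^ (-(1 / N)) :=
        ENNReal.rpow_le_rpow (hg.trans (ENNReal.inv_le_inv.2 hm))
          (neg_nonneg.2 (one_div_neg.2 hN).le)
    _ = ENNReal.ofReal (r ^ (1 / N)) := by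
      rw [ENNReal.inv_rpow, ENNReal.rpow_neg, inv_inv, ENNReal.ofReal_rpow_of_pos hr]

open Real in
lemma lintegral_tauCoeff_half_mul_le {Y : Type*} [PseudoMetricSpace Y] [MeasurableSpace Y]
    {γ : Measure (Y × Y)} [IsProbabilityMeasure γ] {K N D r : ℝ} {g : Y × Y → ℝ≥0∞}
    {m : ℝ≥0∞} (hK : 0 < K) (hN : N < 0) (hD : 0 ≤ D) (hr : 0 < r) (hm : ENNReal.ofReal r ≤ m)
    (hsep : ∀ᵐ p ∂γ, D ≤ dist p.1 p.2) (hg : ∀ᵐ p ∂γ, g p ≤ m⁻¹) :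
    ∫⁻ p, tauCoeff K N (1 / 2) (dist p.1 p.2) * g p ^ (-(1 / N)) ∂γ ≤
      ENNReal.ofReal (2 * cosh (√(K / (1 - N)) * D / 2) ^ (1 - 1 / N))⁻¹ *
        ENNReal.ofReal (r ^ (1 / N)) :=
  lintegral_le_const <| by
    filter_upwards [hsep, hg] with p hp hgp
    exact mul_le_mul' (tauCoeff_half_le hK hN hD hp) (rpow_neg_one_div_le_of_le_inv hN hr hm hgp)

open Metric in
lemma IsCDSpace.exists_isCoupling_one_le_lintegral_tauCoeff_half {X : Type*} [MetricSpace X]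
    [MeasurableSpace X] {μX : Measure X} [IsProbabilityMeasure μX] {K N : ℝ}
    (hCD : IsCDSpace K N μX) (hN : N < 0) {ν₀ ν₁ : Measure X} [IsProbabilityMeasure ν₀]
    [IsProbabilityMeasure ν₁] (hac₀ : ν₀ ≪ μX) (hac₁ : ν₁ ≪ μX) {x₀ : X} {R : ℝ}
    (hball₀ : ∀ᵐ x ∂ν₀, x ∈ closedBall x₀ R) (hball₁ : ∀ᵐ x ∂ν₁, x ∈ closedBall x₀ R)
    (hS₀ : renyiEntropy N μX ν₀ < ∞) (hS₁ : renyiEntropy N μX ν₁ < ∞) :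
    ∃ γ, IsCoupling γ ν₀ ν₁ ∧
      1 ≤ (∫⁻ p, tauCoeff K N (1 / 2) (dist p.1 p.2) * ν₀.rnDeriv μX p.1 ^ (-(1 / N)) ∂γ) +
        ∫⁻ p, tauCoeff K N (1 / 2) (dist p.1 p.2) * ν₁.rnDeriv μX p.2 ^ (-(1 / N)) ∂γ := by
  obtain ⟨νt, γ, hνt₀, -, hgeod, ⟨hγ, -⟩, hentropy⟩ := hCD ν₀ ν₁ ‹_› ‹_› hac₀ hac₁
    (hasFiniteSecondMoment_of_ae_mem_closedBall hball₀)
    (hasFiniteSecondMoment_of_ae_mem_closedBall hball₁) hS₀ hS₁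
  have hhalf : (1 / 2 : ℝ) ∈ Icc (0 : ℝ) 1 := ⟨by norm_num, by norm_num⟩
  -- `IsCDSpace` does not require `νt t` to be a probability measure; finiteness of `W2` forces it.
  have hmid : IsProbabilityMeasure (νt (1 / 2)) := by
    refine isProbabilityMeasure_of_W2_ne_top (ν₀ := ν₀) ?_
    rw [← hνt₀, hgeod 0 ⟨le_rfl, zero_le_one⟩ _ hhalf]
    exact ENNReal.mul_ne_top ofReal_ne_top (W2_lt_top_of_ae_mem_closedBall hball₀ hball₁).ne
  have hbound := (one_le_renyiEntropy hN).trans (hentropy (1 / 2) hhalf N ⟨le_rfl, hN⟩ hS₀ hS₁)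
  rw [show (1 : ℝ) - 1 / 2 = 1 / 2 by norm_num] at hbound
  exact ⟨γ, hγ, hbound⟩

open Real Metric in
lemma IsCDSpace.cosh_rpow_le_of_subset_closedBall {X : Type*} [MetricSpace X] [MeasurableSpace X]
    {μX : Measure X} [IsProbabilityMeasure μX] {K N : ℝ} (hCD : IsCDSpace K N μX) (hK : 0 < K)
    (hN : N < 0) {A₀ A₁ : Set X} (hA₀ : MeasurableSet A₀) (hA₁ : MeasurableSet A₁) {x₀ : X}
    {R : ℝ} (hb₀ : A₀ ⊆ closedBall x₀ R) (hb₁ : A₁ ⊆ closedBall x₀ R) {r₀ r₁ : ℝ} (hr₀ : 0 < r₀)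
    (hr₁ : 0 < r₁) (hm₀ : ENNReal.ofReal r₀ ≤ μX A₀) (hm₁ : ENNReal.ofReal r₁ ≤ μX A₁) {D : ℝ}
    (hD : 0 ≤ D) (hsep : ∀ x ∈ A₀, ∀ y ∈ A₁, D ≤ dist x y) :
    cosh (√(K / (1 - N)) * D / 2) ^ (1 - 1 / N) ≤ (r₀ ^ (1 / N) + r₁ ^ (1 / N)) / 2 := by
  have h0₀ : μX A₀ ≠ 0 := ((ENNReal.ofReal_pos.2 hr₀).trans_le hm₀).ne'
  have h0₁ : μX A₁ ≠ 0 := ((ENNReal.ofReal_pos.2 hr₁).trans_le hm₁).ne'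
  have := isProbabilityMeasure_condProb h0₀
  have := isProbabilityMeasure_condProb h0₁
  have hac₀ := condProb_absolutelyContinuous μX A₀
  have hac₁ := condProb_absolutelyContinuous μX A₁
  obtain ⟨γ, hγ, hbound⟩ := hCD.exists_isCoupling_one_le_lintegral_tauCoeff_half hN hac₀ hac₁
    ((ae_mem_condProb μX hA₀).mono fun _ hx ↦ hb₀ hx)
    ((ae_mem_condProb μX hA₁).mono fun _ hx ↦ hb₁ hx)
    (renyiEntropy_lt_top_of_rnDeriv_le hac₀ (ENNReal.inv_ne_top.2 h0₀)
      (rnDeriv_condProb_le hA₀ h0₀) hN)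
    (renyiEntropy_lt_top_of_rnDeriv_le hac₁ (ENNReal.inv_ne_top.2 h0₁)
      (rnDeriv_condProb_le hA₁ h0₁) hN)
  have : IsProbabilityMeasure γ := ⟨by rw [hγ.measure_univ_eq_left, measure_univ]⟩
  have hsepγ : ∀ᵐ p ∂γ, D ≤ dist p.1 p.2 := by
    filter_upwards [hγ.ae_fst (ae_mem_condProb μX hA₀), hγ.ae_snd (ae_mem_condProb μX hA₁)]
      with p hp₀ hp₁
    exact hsep _ hp₀ _ hp₁
  have hreal := hbound.trans (add_le_add
    (lintegral_tauCoeff_half_mul_le hK hN hD hr₀ hm₀ hsepγ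
      (hγ.ae_fst (hac₀.ae_le (rnDeriv_condProb_le hA₀ h0₀))))
    (lintegral_tauCoeff_half_mul_le hK hN hD hr₁ hm₁ hsepγ
      (hγ.ae_snd (hac₁.ae_le (rnDeriv_condProb_le hA₁ h0₁)))))
  rw [← mul_add, ← ENNReal.ofReal_add (by positivity) (by positivity),
    ← ENNReal.ofReal_mul (by positivity), ENNReal.one_le_ofReal,
    le_inv_mul_iff₀ (by positivity)] at hreal
  linarith

open Real Metric in
lemma IsCDSpace.cosh_rpow_le_of_lt_measure {X : Type*} [MetricSpace X] [MeasurableSpace X]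
    [OpensMeasurableSpace X] {μX : Measure X} [IsProbabilityMeasure μX] {K N : ℝ}
    (hCD : IsCDSpace K N μX) (hK : 0 < K) (hN : N < 0) {A₀ A₁ : Set X} (hA₀ : MeasurableSet A₀)
    (hA₁ : MeasurableSet A₁) {r₀ r₁ : ℝ} (hr₀ : 0 < r₀) (hr₁ : 0 < r₁)
    (hm₀ : ENNReal.ofReal r₀ < μX A₀) (hm₁ : ENNReal.ofReal r₁ < μX A₁) {D : ℝ} (hD : 0 ≤ D)
    (hsep : ∀ x ∈ A₀, ∀ y ∈ A₁, D ≤ dist x y) :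
    cosh (√(K / (1 - N)) * D / 2) ^ (1 - 1 / N) ≤ (r₀ ^ (1 / N) + r₁ ^ (1 / N)) / 2 := by
  obtain ⟨x₀, -⟩ := nonempty_of_measure_ne_zero (zero_le.trans_lt hm₀).ne'
  have hexhaust (A : Set X) :
      Tendsto (fun n : ℕ ↦ μX (A ∩ closedBall x₀ n)) atTop (𝓝 (μX A)) := by
    have : Tendsto (fun n : ℕ ↦ μX (A ∩ closedBall x₀ n)) atTop
        (𝓝 (μX (⋃ n : ℕ, A ∩ closedBall x₀ n))) := tendsto_measure_iUnion_atTop fun _ _ hmn ↦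
      inter_subset_inter_right A (closedBall_subset_closedBall (Nat.cast_le.2 hmn))
    rwa [iUnion_inter_closedBall_nat] at this
  obtain ⟨n, hn₀, hn₁⟩ :=
    (((hexhaust A₀).eventually_const_lt hm₀).and ((hexhaust A₁).eventually_const_lt hm₁)).exists
  exact hCD.cosh_rpow_le_of_subset_closedBall hK hN (hA₀.inter measurableSet_closedBall)
    (hA₁.inter measurableSet_closedBall) inter_subset_right inter_subset_right hr₀ hr₁ hn₀.le
    hn₁.le hD fun x hx y hy ↦ hsep x hx.1 y hy.1

open Real in
lemma IsCDSpace.cosh_rpow_le {X : Type*} [MetricSpace X] [MeasurableSpace X]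
    [OpensMeasurableSpace X] {μX : Measure X} [IsProbabilityMeasure μX] {K N : ℝ}
    (hCD : IsCDSpace K N μX) (hK : 0 < K) (hN : N < 0) {A₀ A₁ : Set X} (hA₀ : MeasurableSet A₀)
    (hA₁ : MeasurableSet A₁) {r₀ r₁ : ℝ} (hr₀ : 0 < r₀) (hr₁ : 0 < r₁)
    (hm₀ : ENNReal.ofReal r₀ ≤ μX A₀) (hm₁ : ENNReal.ofReal r₁ ≤ μX A₁) {D : ℝ} (hD : 0 ≤ D)
    (hsep : ∀ x ∈ A₀, ∀ y ∈ A₁, D ≤ dist x y) :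
    cosh (√(K / (1 - N)) * D / 2) ^ (1 - 1 / N) ≤ (r₀ ^ (1 / N) + r₁ ^ (1 / N)) / 2 := by
  have hlim : Tendsto (fun ε ↦ ((r₀ - ε) ^ (1 / N) + (r₁ - ε) ^ (1 / N)) / 2) (𝓝[>] 0)
      (𝓝 ((r₀ ^ (1 / N) + r₁ ^ (1 / N)) / 2)) := by
    have hcont : ContinuousAt (fun ε ↦ ((r₀ - ε) ^ (1 / N) + (r₁ - ε) ^ (1 / N)) / 2) 0 := by
      fun_prop (disch := simp [hr₀.ne', hr₁.ne'])
    simpa using hcont.tendsto.mono_left nhdsWithin_le_nhds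
  have hlt (r : ℝ) (hr : 0 < r) {m : ℝ≥0∞} (hm : ENNReal.ofReal r ≤ m) :
      ∀ᶠ ε in 𝓝[>] 0, 0 < r - ε ∧ ENNReal.ofReal (r - ε) < m := by
    filter_upwards [Ioo_mem_nhdsGT hr] with ε hε
    exact ⟨by linarith [hε.2],
      ((ENNReal.ofReal_lt_ofReal_iff hr).2 (by linarith [hε.1])).trans_le hm⟩
  refine ge_of_tendsto hlim ?_
  filter_upwards [hlt r₀ hr₀ hm₀, hlt r₁ hr₁ hm₁] with ε hε₀ hε₁
  exact hCD.cosh_rpow_le_of_lt_measure hK hN hA₀ hA₁ hε₀.1 hε₁.1 hε₀.2 hε₁.2 hD hsep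

open Real in
lemma le_mul_acosh_of_cosh_rpow_le {K N D s : ℝ} (hK : 0 < K) (hN : N < 0) (hD : 0 ≤ D)
    (h : cosh (√(K / (1 - N)) * D / 2) ^ (1 - 1 / N) ≤ s) :
    D ≤ 2 * √((1 - N) / K) * acosh (s ^ (-N / (1 - N))) := by
  have h1N : 0 < 1 - N := by linarith
  set y := √(K / (1 - N)) * D / 2
  have hexp : (1 - 1 / N) * (-N / (1 - N)) = 1 := by
    field_simp [hN.ne, h1N.ne']
    ring
  have hcosh : cosh y ≤ s ^ (-N / (1 - N)) := calc
    cosh y = (cosh y ^ (1 - 1 / N)) ^ (-N / (1 - N)) := by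
      rw [← rpow_mul (cosh_pos y).le, hexp, Real.rpow_one]
    _ ≤ s ^ (-N / (1 - N)) := by gcongr; exact div_nonneg (by linarith) h1N.le
  have hy_le : y ≤ acosh (s ^ (-N / (1 - N))) := by
    rw [← arcosh_cosh (by positivity : 0 ≤ y)]
    exact (arcosh_le_arcosh (cosh_pos y) ((cosh_pos y).trans_le hcosh)).2 hcosh
  have hsqrt : √((1 - N) / K) * √(K / (1 - N)) = 1 := by
    rw [← sqrt_mul (by positivity), show (1 - N) / K * (K / (1 - N)) = 1 by field_simp, sqrt_one]
  calc D = 2 * √((1 - N) / K) * y := by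
        linear_combination -D * hsqrt
    _ ≤ _ := by gcongr

lemma biInf_edist_le_ofReal {X : Type*} [PseudoMetricSpace X] {A₀ A₁ : Set X}
    (h₀ : A₀.Nonempty) (h₁ : A₁.Nonempty) {B : ℝ}
    (h : ∀ D, 0 ≤ D → (∀ x ∈ A₀, ∀ y ∈ A₁, D ≤ dist x y) → D ≤ B) :
    (⨅ x ∈ A₀, ⨅ y ∈ A₁, edist x y) ≤ ENNReal.ofReal B := by
  obtain ⟨x₀, hx₀⟩ := h₀
  obtain ⟨y₀, hy₀⟩ := h₁
  have hle : ∀ x ∈ A₀, ∀ y ∈ A₁, (⨅ x ∈ A₀, ⨅ y ∈ A₁, edist x y) ≤ edist x y :=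
    fun x hx y hy ↦ iInf₂_le_of_le x hx (iInf₂_le y hy)
  rw [← ENNReal.ofReal_toReal (ne_top_of_le_ne_top (edist_ne_top x₀ y₀) (hle x₀ hx₀ y₀ hy₀))]
  refine ENNReal.ofReal_le_ofReal (h _ ENNReal.toReal_nonneg fun x hx y hy ↦ ?_)
  rw [dist_edist]
  exact ENNReal.toReal_mono (edist_ne_top x y) (hle x hx y hy)

open MeasureTheory Set in
theorem sep_bound_of_CD_general {X : Type*} [MetricSpace X] [MeasurableSpace X] [BorelSpace X]
    (μX : Measure X) [IsProbabilityMeasure μX]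
    (K N : ℝ) (hK : 0 < K) (hN : N < 0) (hCD : IsCDSpace K N μX)
    (κ₀ κ₁ : ℝ) (h0 : 0 < κ₀) (h1 : 0 < κ₁)
    (A₀ A₁ : Set X) (hA₀ : MeasurableSet A₀) (hA₁ : MeasurableSet A₁)
    (hm0 : ENNReal.ofReal κ₀ ≤ μX A₀) (hm1 : ENNReal.ofReal κ₁ ≤ μX A₁) :
    (⨅ x ∈ A₀, ⨅ y ∈ A₁, edist x y) ≤
      ENNReal.ofReal (2 * Real.sqrt ((1 - N) / K) *
        acosh (((κ₀ ^ (1 / N) + κ₁ ^ (1 / N)) / 2) ^ (-N / (1 - N)))) := by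
  have hA₀_ne : A₀.Nonempty := nonempty_of_measure_ne_zero ((ofReal_pos.2 h0).trans_le hm0).ne'
  have hA₁_ne : A₁.Nonempty := nonempty_of_measure_ne_zero ((ofReal_pos.2 h1).trans_le hm1).ne'
  refine biInf_edist_le_ofReal hA₀_ne hA₁_ne fun D hD hsep ↦ ?_
  exact le_mul_acosh_of_cosh_rpow_le hK hN hD
    (hCD.cosh_rpow_le hK hN hA₀ hA₁ h0 h1 hm0 hm1 hD hsep)

open MeasureTheory Set in
/-- Separation distance bound for `CD(K,N)` spaces with `K > 0`, `N < 0`. -/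
theorem sep_bound_of_CD {X : Type*} [MetricSpace X] [CompleteSpace X]
    [TopologicalSpace.SeparableSpace X] [MeasurableSpace X] [BorelSpace X]
    (μX : Measure X) [IsProbabilityMeasure μX]
    (K N : ℝ) (hK : 0 < K) (hN : N < 0) (hCD : IsCDSpace K N μX)
    (κ₀ κ₁ : ℝ) (h0 : 0 < κ₀) (h1 : 0 < κ₁) (hsum : κ₀ + κ₁ < 1)
    (A₀ A₁ : Set X) (hA₀ : MeasurableSet A₀) (hA₁ : MeasurableSet A₁)
    (hm0 : ENNReal.ofReal κ₀ ≤ μX A₀) (hm1 : ENNReal.ofReal κ₁ ≤ μX A₁) :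
    (⨅ x ∈ A₀, ⨅ y ∈ A₁, edist x y) ≤
      ENNReal.ofReal (2 * Real.sqrt ((1 - N) / K) *
        acosh (((κ₀ ^ (1 / N) + κ₁ ^ (1 / N)) / 2) ^ (-N / (1 - N)))) :=
  sep_bound_of_CD_general μX K N hK hN hCD κ₀ κ₁ h0 h1 A₀ A₁ hA₀ hA₁ hm0 hm1
end

section
/- Let X = (X, d_X, μ_X) be an mm-space that is a CD(K,N) space for some K > 0 and N < 0, and let κ ∈ (0,1). Then for every 1-Lipschitz function f : X → ℝ and every ε > 0 there exists a Borel set A ⊆ ℝ with (f_*μ_X)(A) ≥ 1 − κ and diam A ≤ 2·√((1−N)/K)·arcosh((2/κ)^{1/(1−N)}) + ε, where arcosh(x) = log(x + √(x²−1)) for x ≥ 1. (Equivalently, the κ-observable diameter Obsdiam(X; −κ) := sup over 1-Lipschitz f : X → ℝ of inf{diam A : A ⊆ ℝ Borel, (f_*μ_X)(A) ≥ 1−κ} is at most 2·√((1−N)/K)·arcosh((2/κ)^{1/(1−N)}).) -/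
open MeasureTheory ENNReal Filter Topology Set

section AuxLemmas

open MeasureTheory ENNReal Filter Topology Set

/-! ### Auxiliary lemmas -/

lemma my_cosh_acosh {M : ℝ} (hM : 1 ≤ M) : Real.cosh (acosh M) = M := by
  have h1 : (0:ℝ) ≤ M ^ 2 - 1 := by nlinarith
  set s := Real.sqrt (M ^ 2 - 1) with hs
  have hs0 : 0 ≤ s := Real.sqrt_nonneg _
  have hs2 : s ^ 2 = M ^ 2 - 1 := Real.sq_sqrt h1
  have hy : 0 < M + s := by nlinarith
  have hexp : Real.exp (-(acosh M)) = M - s := by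
    rw [acosh, Real.exp_neg, Real.exp_log hy]
    exact inv_eq_of_mul_eq_one_right (by nlinarith)
  rw [Real.cosh_eq, acosh, Real.exp_log hy, ← acosh, hexp]
  ring

lemma my_acosh_nonneg {M : ℝ} (hM : 1 ≤ M) : 0 ≤ acosh M :=
  Real.log_nonneg (by nlinarith [Real.sqrt_nonneg (M ^ 2 - 1)])

lemma my_ratio_helper (s u k : ℝ) (h1 : s ≠ 0) (h3 : u ≠ 0) (h2 : k ≠ 0) :
    s / u / ((2 * s * k) / (2 * u)) = k⁻¹ := by
  field_simp

lemma my_tau_half_eq {K N θ : ℝ} (hK : 0 < K) (hN : N < 0) (hθ : 0 < θ) :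
    tauCoeff K N (1/2) θ =
      ENNReal.ofReal ((1/2) *
        Real.cosh (Real.sqrt (K / (1 - N)) * ((1/2) * θ)) ^ (-(1 - 1 / N))) := by
  have hN1 : N - 1 < 0 := by linarith
  have hkap : K / (N - 1) < 0 := div_neg_of_pos_of_neg hK hN1
  have hneg : -(K / (N - 1)) = K / (1 - N) := by rw [← div_neg, neg_sub]
  set c := Real.sqrt (K / (1 - N)) with hc
  have hcpos : 0 < c := Real.sqrt_pos.mpr (div_pos hK (by linarith))
  have homega : omegaKappa (K / (N - 1)) = ∞ := by
    rw [omegaKappa, if_neg (not_lt.mpr hkap.le)]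
  rw [tauCoeff, if_pos (by rw [homega]; exact ofReal_lt_top)]
  congr 1
  have hs : ∀ v : ℝ, 0 < v → sKappa (K / (N - 1)) v = Real.sinh (c * v) / (c * v) := by
    intro v hv
    rw [sKappa, if_neg hv.ne', if_neg (not_lt.mpr hkap.le), if_pos hkap, hneg]
  have h2 : (0:ℝ) < (1/2) * θ := by linarith
  set u := c * ((1/2) * θ) with hu
  have hupos : 0 < u := by positivity
  have hsinh : Real.sinh (c * θ) = 2 * Real.sinh u * Real.cosh u := by
    rw [show c * θ = 2 * u by rw [hu]; ring, Real.sinh_two_mul]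
  have hshpos : 0 < Real.sinh u := by positivity
  have hchpos : 0 < Real.cosh u := Real.cosh_pos _
  rw [hs _ h2, hs _ hθ, hsinh, show c * θ = 2 * u by rw [hu]; ring, ← hu,
    my_ratio_helper _ _ _ hshpos.ne' hupos.ne' hchpos.ne',
    ← Real.rpow_neg_one (Real.cosh u), ← Real.rpow_mul hchpos.le]
  norm_num

lemma my_tau_half_le {K N θ θ₀ : ℝ} (hK : 0 < K) (hN : N < 0) (hθ₀ : 0 < θ₀) (hθ : θ₀ ≤ θ) :
    tauCoeff K N (1/2) θ ≤
      ENNReal.ofReal ((1/2) *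
        Real.cosh (Real.sqrt (K / (1 - N)) * ((1/2) * θ₀)) ^ (-(1 - 1 / N))) := by
  rw [my_tau_half_eq hK hN (lt_of_lt_of_le hθ₀ hθ)]
  apply ENNReal.ofReal_le_ofReal
  have hc : 0 < Real.sqrt (K / (1 - N)) := Real.sqrt_pos.mpr (div_pos hK (by linarith))
  have hp : -(1 - 1/N) ≤ 0 := by
    have : 1/N < 0 := div_neg_of_pos_of_neg one_pos hN
    linarith
  have hmono : Real.cosh (Real.sqrt (K / (1 - N)) * ((1/2) * θ₀))
      ≤ Real.cosh (Real.sqrt (K / (1 - N)) * ((1/2) * θ)) := by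
    rw [Real.cosh_le_cosh]
    rw [abs_of_nonneg (mul_nonneg hc.le (by linarith)), abs_of_nonneg (mul_nonneg hc.le (by linarith))]
    have : (0:ℝ) < 1/2 := by norm_num
    nlinarith
  have := Real.rpow_le_rpow_of_nonpos (Real.cosh_pos _) hmono hp
  nlinarith [this]

lemma my_quantile_exists (m : Measure ℝ) [IsProbabilityMeasure m] {c : ℝ} (hc0 : 0 < c)
    (hc1 : c < 1) : ∃ a : ℝ, ENNReal.ofReal c ≤ m (Iic a) ∧ m (Iio a) ≤ ENNReal.ofReal c := by
  set S : Set ℝ := {r | ENNReal.ofReal c ≤ m (Iic r)} with hS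
  have hup : ∀ r ∈ S, ∀ r', r ≤ r' → r' ∈ S := fun r hr r' hrr' =>
    le_trans hr (measure_mono (Iic_subset_Iic.mpr hrr'))
  have hne : S.Nonempty := by
    have h1 : Tendsto (fun n : ℕ => m (Iic (n : ℝ))) atTop (𝓝 (m (⋃ n : ℕ, Iic (n : ℝ)))) :=
      tendsto_measure_iUnion_atTop (fun i j hij => Iic_subset_Iic.mpr (by exact_mod_cast hij))
    have hU : (⋃ n : ℕ, Iic ((n : ℝ))) = univ := by
      ext x; simp only [mem_iUnion, mem_Iic, mem_univ, iff_true]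
      exact exists_nat_ge x
    rw [hU, measure_univ] at h1
    have : ∀ᶠ n : ℕ in atTop, ENNReal.ofReal c ≤ m (Iic (n:ℝ)) :=
      Filter.Tendsto.eventually_const_le (by simpa using (ENNReal.ofReal_lt_one.mpr hc1)) h1
    obtain ⟨n, hn⟩ := this.exists
    exact ⟨(n:ℝ), hn⟩
  have hbdd : BddBelow S := by
    by_contra hb
    have h2 : Tendsto (fun n : ℕ => m (Iic (-(n : ℝ)))) atTop (𝓝 (m (⋂ n : ℕ, Iic (-(n : ℝ))))) := by
      refine tendsto_measure_iInter_atTop (fun n => (measurableSet_Iic).nullMeasurableSet)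
        (fun i j hij => Iic_subset_Iic.mpr (by exact_mod_cast neg_le_neg (Nat.cast_le.mpr hij)))
        ⟨0, measure_ne_top m _⟩
    have hI : (⋂ n : ℕ, Iic (-(n : ℝ))) = ∅ := by
      ext x; simp only [mem_iInter, mem_Iic, mem_empty_iff_false, iff_false, not_forall, not_le]
      obtain ⟨n, hn⟩ := exists_nat_gt (-x)
      exact ⟨n, by linarith⟩
    rw [hI, measure_empty] at h2
    have : ∀ᶠ n : ℕ in atTop, m (Iic (-(n:ℝ))) < ENNReal.ofReal c :=
      Filter.Tendsto.eventually_lt_const (by simpa using ENNReal.ofReal_pos.mpr hc0) h2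
    obtain ⟨n, hn⟩ := this.exists
    apply hb
    refine ⟨-(n:ℝ), fun r hr => ?_⟩
    by_contra hlt
    push_neg at hlt
    exact absurd (le_trans hr (measure_mono (Iic_subset_Iic.mpr hlt.le))) (not_le.mpr hn)
  set a := sInf S with ha
  refine ⟨a, ?_, ?_⟩
  · have h3 : Tendsto (fun n : ℕ => m (Iic (a + 1/(n+1 : ℝ)))) atTop (𝓝 (m (⋂ n : ℕ, Iic (a + 1/(n+1:ℝ))))) := by
      refine tendsto_measure_iInter_atTop (fun n => measurableSet_Iic.nullMeasurableSet)
        (fun i j hij => Iic_subset_Iic.mpr ?_) ⟨0, measure_ne_top m _⟩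
      have : (1:ℝ)/(j+1) ≤ 1/(i+1) := by
        apply one_div_le_one_div_of_le (by positivity)
        exact_mod_cast add_le_add_left (Nat.cast_le.mpr hij) 1
      linarith
    have hI : (⋂ n : ℕ, Iic (a + 1/(n+1:ℝ))) = Iic a := by
      ext x; simp only [mem_iInter, mem_Iic]
      constructor
      · intro h
        by_contra hx
        push_neg at hx
        obtain ⟨n, hn⟩ := exists_nat_gt (1/(x - a))
        have hxa : 0 < x - a := by linarith
        have h1n : 1/(n+1:ℝ) < x - a := by
          rw [div_lt_iff₀ (by positivity)]
          rw [div_lt_iff₀ hxa] at hn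
          nlinarith
        exact absurd (h n) (by push_neg; linarith)
      · intro h n
        have h0 : (0:ℝ) < 1/(n+1:ℝ) := by positivity
        linarith
    rw [hI] at h3
    refine ge_of_tendsto h3 (Eventually.of_forall fun n => ?_)
    have : a + 1/(n+1:ℝ) ∈ S := by
      obtain ⟨r, hr, hra⟩ := exists_lt_of_csInf_lt hne (show a < a + 1/(n+1:ℝ) by
        have : (0:ℝ) < 1/(n+1) := by positivity
        linarith)
      exact hup r hr _ hra.le
    exact this
  · have h4 : Tendsto (fun n : ℕ => m (Iic (a - 1/(n+1 : ℝ)))) atTop (𝓝 (m (⋃ n : ℕ, Iic (a - 1/(n+1:ℝ))))) := by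
      refine tendsto_measure_iUnion_atTop (fun i j hij => Iic_subset_Iic.mpr ?_)
      have : (1:ℝ)/(j+1) ≤ 1/(i+1) := by
        apply one_div_le_one_div_of_le (by positivity)
        exact_mod_cast add_le_add_left (Nat.cast_le.mpr hij) 1
      linarith
    have hU : (⋃ n : ℕ, Iic (a - 1/(n+1:ℝ))) = Iio a := by
      ext x; simp only [mem_iUnion, mem_Iic, mem_Iio]
      constructor
      · rintro ⟨n, hn⟩
        have h0 : (0:ℝ) < 1/(n+1:ℝ) := by positivity
        linarith
      · intro h
        obtain ⟨n, hn⟩ := exists_nat_gt (1/(a - x))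
        have hxa : 0 < a - x := by linarith
        have h1n : 1/(n+1:ℝ) < a - x := by
          rw [div_lt_iff₀ (by positivity)]
          rw [div_lt_iff₀ hxa] at hn
          nlinarith
        exact ⟨n, by linarith⟩
    rw [hU] at h4
    refine le_of_tendsto h4 (Eventually.of_forall fun n => ?_)
    have hnotS : a - 1/(n+1:ℝ) ∉ S := fun hmem => by
      have := csInf_le hbdd hmem
      have h0 : (0:ℝ) < 1/(n+1:ℝ) := by positivity
      rw [← ha] at this; linarith
    simp only [hS, mem_setOf_eq, not_le] at hnotS
    exact hnotS.le

lemma my_exists_coupling_of_W2_lt_top {Y : Type*} [PseudoMetricSpace Y] [MeasurableSpace Y]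
    {μ ν : Measure Y} (h : W2 μ ν < ∞) : ∃ π, IsCoupling π μ ν := by
  by_contra h'
  push_neg at h'
  have : W2 μ ν = ∞ := by
    rw [W2]
    rw [iInf_eq_top]
    intro π
    rw [iInf_eq_top]
    exact fun hc => absurd hc (h' π)
  rw [this] at h
  exact absurd h (lt_irrefl _)

lemma my_coupling_univ {Y : Type*} [MeasurableSpace Y] {π : Measure (Y × Y)} {μ ν : Measure Y}
    (h : IsCoupling π μ ν) : π univ = μ univ ∧ ν univ = μ univ := by
  constructor
  · rw [← h.1, Measure.map_apply measurable_fst MeasurableSet.univ, Set.preimage_univ]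
  · rw [← h.1, ← h.2, Measure.map_apply measurable_fst MeasurableSet.univ,
      Measure.map_apply measurable_snd MeasurableSet.univ, Set.preimage_univ, Set.preimage_univ]

lemma my_coupling_ae {Y : Type*} [MeasurableSpace Y] {π : Measure (Y × Y)} {μ ν : Measure Y}
    (h : IsCoupling π μ ν) {S T : Set Y} (hS : MeasurableSet S) (hT : MeasurableSet T)
    (hμS : μ Sᶜ = 0) (hνT : ν Tᶜ = 0) : ∀ᵐ p ∂π, p.1 ∈ S ∧ p.2 ∈ T := by
  have h1 : π (Prod.fst ⁻¹' Sᶜ) = 0 := by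
    rw [← Measure.map_apply measurable_fst hS.compl, h.1]; exact hμS
  have h2 : π (Prod.snd ⁻¹' Tᶜ) = 0 := by
    rw [← Measure.map_apply measurable_snd hT.compl, h.2]; exact hνT
  rw [ae_iff]
  refine measure_mono_null (fun p hp => ?_) (measure_union_null h1 h2)
  simp only [mem_setOf_eq, not_and_or] at hp
  rcases hp with hp | hp
  · exact Or.inl hp
  · exact Or.inr hp

lemma my_one_le_renyi {Y : Type*} [MeasurableSpace Y] (μ ν : Measure Y)
    [IsProbabilityMeasure μ] (hν : ν Set.univ = 1) {Nr : ℝ} (hNr : Nr < 0) :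
    1 ≤ renyiEntropy Nr μ ν := by
  rw [renyiEntropy]
  split_ifs with hac
  · haveI : IsFiniteMeasure ν := ⟨by rw [hν]; exact one_lt_top⟩
    set p := 1 - 1/Nr with hp_def
    have hp : 1 < p := by
      have : 1/Nr < 0 := div_neg_of_pos_of_neg one_pos hNr
      rw [hp_def]; linarith
    have hpq := Real.HolderConjugate.conjExponent hp
    have h1 : ∫⁻ x, ν.rnDeriv μ x ∂μ = 1 := by
      rw [Measure.lintegral_rnDeriv hac, hν]
    have h2 := ENNReal.lintegral_mul_le_Lp_mul_Lq μ hpq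
      (Measure.measurable_rnDeriv ν μ).aemeasurable
      (aemeasurable_const (b := (1 : ℝ≥0∞)))
    simp only [Pi.mul_apply, mul_one, ENNReal.one_rpow, lintegral_const, measure_univ, one_mul,
      ENNReal.one_rpow] at h2
    rw [h1] at h2
    have hppos : (0:ℝ) < p := by linarith
    have h3 : (1:ℝ≥0∞) ≤ ((∫⁻ x, ν.rnDeriv μ x ^ p ∂μ) ^ (1/p)) ^ p := by
      calc (1:ℝ≥0∞) = 1 ^ p := (ENNReal.one_rpow p).symm
      _ ≤ _ := ENNReal.rpow_le_rpow h2 hppos.le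
    rwa [← ENNReal.rpow_mul, one_div_mul_cancel hppos.ne', ENNReal.rpow_one] at h3
  · exact le_top

lemma my_cond_props {Y : Type*} [MeasurableSpace Y] (μ : Measure Y) [IsProbabilityMeasure μ]
    {B : Set Y} (hB : MeasurableSet B) (hpos : 0 < μ B) {Nr : ℝ} (hNr : Nr < 0) :
    ((μ B)⁻¹ • μ.restrict B) Set.univ = 1 ∧
    ((μ B)⁻¹ • μ.restrict B) ≪ μ ∧
    (∀ᵐ x ∂μ, ((μ B)⁻¹ • μ.restrict B).rnDeriv μ x ≤ (μ B)⁻¹) ∧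
    renyiEntropy Nr μ ((μ B)⁻¹ • μ.restrict B) < ∞ ∧
    ((μ B)⁻¹ • μ.restrict B) Bᶜ = 0 := by
  have hne : μ B ≠ 0 := hpos.ne'
  have hnt : μ B ≠ ∞ := measure_ne_top μ B
  set ν := (μ B)⁻¹ • μ.restrict B with hν
  have huniv : ν Set.univ = 1 := by
    rw [hν, Measure.smul_apply, smul_eq_mul, Measure.restrict_apply_univ]
    exact ENNReal.inv_mul_cancel hne hnt
  have hac : ν ≪ μ := by
    intro s hs
    have hle : μ.restrict B s ≤ μ s := Measure.le_iff'.mp Measure.restrict_le_self s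
    have : μ.restrict B s = 0 := le_antisymm (hs ▸ hle) zero_le
    rw [hν, Measure.smul_apply, this, smul_eq_mul, mul_zero]
  have hνwd : ν = μ.withDensity (fun x => (μ B)⁻¹ * B.indicator 1 x) := by
    rw [hν, ← withDensity_indicator_one hB, ← withDensity_smul _ (measurable_one.indicator hB)]
    rfl
  have hmeas : Measurable (fun x => (μ B)⁻¹ * B.indicator 1 x) :=
    measurable_const.mul (measurable_one.indicator hB)
  have hrn : ν.rnDeriv μ =ᵐ[μ] fun x => (μ B)⁻¹ * B.indicator 1 x := by
    rw [hνwd]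
    exact Measure.rnDeriv_withDensity μ hmeas
  have hrnle : ∀ᵐ x ∂μ, ν.rnDeriv μ x ≤ (μ B)⁻¹ := by
    filter_upwards [hrn] with x hx
    rw [hx]
    calc (μ B)⁻¹ * B.indicator 1 x ≤ (μ B)⁻¹ * 1 := by
          gcongr
          exact Set.indicator_le_self' (fun _ _ => zero_le) x
    _ = (μ B)⁻¹ := mul_one _
  have hent : renyiEntropy Nr μ ν < ∞ := by
    rw [renyiEntropy, if_pos hac]
    have hp0 : (0:ℝ) ≤ 1 - 1/Nr := by
      have : 1/Nr < 0 := div_neg_of_pos_of_neg one_pos hNr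
      linarith
    calc ∫⁻ x, ν.rnDeriv μ x ^ (1 - 1/Nr) ∂μ
        ≤ ∫⁻ _, ((μ B)⁻¹) ^ (1 - 1/Nr) ∂μ := by
          refine lintegral_mono_ae ?_
          filter_upwards [hrnle] with x hx
          exact ENNReal.rpow_le_rpow hx hp0
    _ = ((μ B)⁻¹) ^ (1 - 1/Nr) := by rw [lintegral_const, measure_univ, mul_one]
    _ < ∞ := ENNReal.rpow_lt_top_of_nonneg hp0 (by simp [hne])
  have hcompl : ν Bᶜ = 0 := by
    rw [hν, Measure.smul_apply, Measure.restrict_apply hB.compl, compl_inter_self,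
      measure_empty, smul_eq_mul, mul_zero]
  exact ⟨huniv, hac, hrnle, hent, hcompl⟩


lemma my_final_numeric {N κ κ' E co : ℝ} (hN : N < 0) (hκ0 : 0 < κ) (hκ'pos : 0 < κ')
    (hE1 : 1 < E) (hκκ' : κ/κ' < E^((1:ℝ)-N)) (h2κ : 1 < 2/κ)
    (hco : ((2/κ)^(1/(1-N) : ℝ)) * E ≤ co) :
    (1/2) * co ^ (-(1 - 1/N)) * ((2/κ')^(-(1/N)))
      + (1/2) * co ^ (-(1 - 1/N)) * ((2/κ')^(-(1/N))) < 1 := by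
  set M : ℝ := (2/κ)^(1/(1-N):ℝ) with hM
  have hNpos : (0:ℝ) < 1 - N := by linarith
  have hN0 : N ≠ 0 := hN.ne
  have hN1 : (1:ℝ) - N ≠ 0 := hNpos.ne'
  have hE0 : (0:ℝ) < E := by linarith
  have h1N : 1/N < 0 := div_neg_of_pos_of_neg one_pos hN
  have he0 : (0:ℝ) < -(1/N) := by linarith
  have hM1 : 1 < M := Real.one_lt_rpow h2κ (by positivity)
  have hMEpos : (0:ℝ) < M*E := mul_pos (by linarith) hE0
  have h2κpos : (0:ℝ) < 2/κ := by positivity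
  have h2κ'pos : (0:ℝ) < 2/κ' := by positivity
  have hcoshbound : co ^ (-(1 - 1/N)) ≤ (M*E) ^ (-(1 - 1/N)) :=
    Real.rpow_le_rpow_of_nonpos hMEpos hco (by linarith)
  have hMp : M ^ (-(1 - 1/N)) = (2/κ) ^ (1/N) := by
    rw [hM, ← Real.rpow_mul h2κpos.le]
    congr 1
    field_simp
    ring
  have hswap : (2/κ) ^ (1/N:ℝ) = (κ/2) ^ (-(1/N):ℝ) := by
    rw [show (2/κ : ℝ) = (κ/2)⁻¹ by rw [inv_div], Real.inv_rpow (by positivity),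
      ← Real.rpow_neg (by positivity)]
  have hprodr : (2/κ) ^ (1/N:ℝ) * (2/κ') ^ (-(1/N):ℝ) = (κ/κ') ^ (-(1/N):ℝ) := by
    rw [hswap, ← Real.mul_rpow (by positivity) (by positivity)]
    congr 1
    field_simp
  have hfinalr : (κ/κ') ^ (-(1/N):ℝ) < E ^ ((1:ℝ) - 1/N) := by
    calc (κ/κ') ^ (-(1/N):ℝ) < (E^((1:ℝ)-N)) ^ (-(1/N):ℝ) :=
          Real.rpow_lt_rpow (by positivity) hκκ' he0
    _ = E ^ (((1:ℝ)-N) * (-(1/N))) := by rw [← Real.rpow_mul hE0.le]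
    _ = E ^ ((1:ℝ) - 1/N) := by
          congr 1
          field_simp
          ring
  have hEp : E ^ (-(1 - 1/N):ℝ) * E ^ ((1:ℝ) - 1/N) = 1 := by
    rw [← Real.rpow_add hE0]
    norm_num
  have hwpos : (0:ℝ) < (2/κ') ^ (-(1/N):ℝ) := Real.rpow_pos_of_pos h2κ'pos _
  calc (1/2) * co ^ (-(1 - 1/N)) * ((2/κ')^(-(1/N)))
      + (1/2) * co ^ (-(1 - 1/N)) * ((2/κ')^(-(1/N)))
      = co ^ (-(1 - 1/N)) * ((2/κ')^(-(1/N))) := by ring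
  _ ≤ (M*E) ^ (-(1 - 1/N)) * ((2/κ')^(-(1/N))) :=
      mul_le_mul_of_nonneg_right hcoshbound hwpos.le
  _ = E ^ (-(1 - 1/N)) * ((κ/κ') ^ (-(1/N):ℝ)) := by
      rw [Real.mul_rpow (by linarith : (0:ℝ) ≤ M) hE0.le, hMp,
        show (2/κ) ^ (1/N:ℝ) * E ^ (-(1 - 1/N)) * ((2/κ')^(-(1/N)))
          = E ^ (-(1 - 1/N)) * ((2/κ) ^ (1/N:ℝ) * (2/κ')^(-(1/N))) by ring, hprodr]
  _ < E ^ (-(1 - 1/N)) * E ^ ((1:ℝ) - 1/N) :=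
      mul_lt_mul_of_pos_left hfinalr (Real.rpow_pos_of_pos hE0 _)
  _ = 1 := hEp

end AuxLemmas

set_option maxHeartbeats 1000000 in
open MeasureTheory Set in
/-- Observable diameter bound for `CD(K,N)` spaces with `K > 0`, `N < 0`:
for every 1-Lipschitz `f : X → ℝ` and `ε > 0` there is a Borel set `A ⊆ ℝ` of
`f_*μ_X`-measure at least `1 - κ` with
`diam A ≤ 2 √((1-N)/K) arcosh((2/κ)^{1/(1-N)}) + ε`. -/
theorem obsdiam_bound_of_CD {X : Type*} [MetricSpace X] [CompleteSpace X]
    [TopologicalSpace.SeparableSpace X] [MeasurableSpace X] [BorelSpace X]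
    (μX : Measure X) [IsProbabilityMeasure μX]
    (K N : ℝ) (hK : 0 < K) (hN : N < 0) (hCD : IsCDSpace K N μX)
    (κ : ℝ) (hκ : κ ∈ Set.Ioo (0:ℝ) 1) :
    ∀ f : X → ℝ, LipschitzWith 1 f → ∀ ε : ℝ, 0 < ε →
      ∃ A : Set ℝ, MeasurableSet A ∧ ENNReal.ofReal (1 - κ) ≤ (μX.map f) A ∧
        Bornology.IsBounded A ∧ Metric.diam A ≤ 2 * Real.sqrt ((1 - N) / K) * acosh ((2 / κ) ^ (1 / (1 - N))) + ε := by
  intro f hf ε hε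
  have hfm : Measurable f := hf.continuous.measurable
  set m : Measure ℝ := μX.map f with hm
  haveI : IsProbabilityMeasure m := Measure.isProbabilityMeasure_map hfm.aemeasurable
  obtain ⟨hκ0, hκ1⟩ := hκ
  obtain ⟨a, ha1, ha2⟩ := my_quantile_exists m (by linarith : (0:ℝ) < κ/2) (by linarith)
  haveI : IsProbabilityMeasure (m.map (Neg.neg : ℝ → ℝ)) :=
    Measure.isProbabilityMeasure_map measurable_neg.aemeasurable
  obtain ⟨b', hb1', hb2'⟩ := my_quantile_exists (m.map (Neg.neg : ℝ → ℝ))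
    (by linarith : (0:ℝ) < κ/2) (by linarith)
  have hmapIic : (m.map (Neg.neg : ℝ → ℝ)) (Iic b') = m (Ici (-b')) := by
    rw [Measure.map_apply measurable_neg measurableSet_Iic]
    congr 1; ext x; simp [neg_le]
  have hmapIio : (m.map (Neg.neg : ℝ → ℝ)) (Iio b') = m (Ioi (-b')) := by
    rw [Measure.map_apply measurable_neg measurableSet_Iio]
    congr 1; ext x; simp [neg_lt]
  set b := -b' with hbdef
  rw [hmapIic] at hb1'
  rw [hmapIio] at hb2'
  refine ⟨Icc a b, measurableSet_Icc, ?_, ?_⟩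
  · -- measure estimate
    have hcover : (univ : Set ℝ) ⊆ Iio a ∪ (Icc a b ∪ Ioi b) := by
      intro x _
      rcases lt_or_ge x a with h | h
      · exact Or.inl h
      · rcases le_or_gt x b with h2 | h2
        · exact Or.inr (Or.inl ⟨h, h2⟩)
        · exact Or.inr (Or.inr h2)
    have h1 : (1:ℝ≥0∞) ≤ m (Iio a) + (m (Icc a b) + m (Ioi b)) := by
      calc (1:ℝ≥0∞) = m univ := measure_univ.symm
      _ ≤ m (Iio a ∪ (Icc a b ∪ Ioi b)) := measure_mono hcover
      _ ≤ m (Iio a) + m (Icc a b ∪ Ioi b) := measure_union_le _ _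
      _ ≤ m (Iio a) + (m (Icc a b) + m (Ioi b)) := by
          gcongr
          exact measure_union_le _ _
    have h2 : (1:ℝ≥0∞) ≤ ENNReal.ofReal (κ/2) + (m (Icc a b) + ENNReal.ofReal (κ/2)) :=
      h1.trans (add_le_add ha2 (add_le_add_right hb2' _))
    have h3 : ENNReal.ofReal (κ/2) + (m (Icc a b) + ENNReal.ofReal (κ/2))
        = m (Icc a b) + ENNReal.ofReal κ := by
      rw [show κ = κ/2 + κ/2 by ring, ENNReal.ofReal_add (by linarith) (by linarith)]
      ring
    rw [h3] at h2
    rw [show ENNReal.ofReal (1 - κ) = 1 - ENNReal.ofReal κ by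
      rw [ENNReal.ofReal_sub _ hκ0.le, ENNReal.ofReal_one]]
    exact tsub_le_iff_right.mpr h2
  · -- diameter estimate
    set M : ℝ := (2 / κ) ^ (1 / (1 - N)) with hMdef
    have hNpos : (0:ℝ) < 1 - N := by linarith
    have h2κ : 1 < 2/κ := by rw [lt_div_iff₀ hκ0]; linarith
    have hexp : (0:ℝ) < 1/(1-N) := by positivity
    have hM1 : 1 < M := Real.one_lt_rpow h2κ hexp
    set D : ℝ := 2 * Real.sqrt ((1-N)/K) * acosh M with hDdef
    have hD0 : 0 ≤ D := by
      rw [hDdef]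
      exact mul_nonneg (mul_nonneg (by norm_num) (Real.sqrt_nonneg _)) (my_acosh_nonneg hM1.le)
    have hcrux : b - a ≤ D + ε := by
      by_contra hcon
      push_neg at hcon
      -- setup constants
      have h1N : 1/N < 0 := div_neg_of_pos_of_neg one_pos hN
      set c : ℝ := Real.sqrt (K/(1-N)) with hcdef
      have hcpos : 0 < c := Real.sqrt_pos.mpr (div_pos hK hNpos)
      set E : ℝ := Real.cosh (c * ((1/2) * ε)) with hEdef
      have hE1 : 1 < E := Real.one_lt_cosh.mpr (by positivity)
      have hE0 : (0:ℝ) < E := by linarith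
      have hEN1 : (0:ℝ) < E^(N-1:ℝ) := Real.rpow_pos_of_pos hE0 _
      have hEN2 : E^(N-1:ℝ) < 1 := Real.rpow_lt_one_of_one_lt_of_neg hE1 (by linarith)
      set κ' : ℝ := κ * ((E^(N-1:ℝ) + 1)/2) with hκ'def
      have hκ'pos : 0 < κ' := by rw [hκ'def]; exact mul_pos hκ0 (by linarith)
      have hκ'lt : κ' < κ := by rw [hκ'def]; nlinarith
      have hEE : E^(N-1:ℝ) * E^(1-N:ℝ) = 1 := by
        rw [← Real.rpow_add hE0]; norm_num
      have hE1N : 1 < E^(1-N:ℝ) := Real.one_lt_rpow hE1 (by linarith)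
      have hκκ' : κ / κ' < E^(1-N:ℝ) := by
        rw [div_lt_iff₀ hκ'pos, hκ'def]
        nlinarith
      -- base point
      obtain ⟨x₀, -⟩ := MeasureTheory.nonempty_of_measure_ne_zero
        (show μX univ ≠ 0 by simp)
      -- choose radius
      have hchoose : ∀ (s : Set ℝ), MeasurableSet s → ENNReal.ofReal (κ/2) ≤ m s →
          ∃ n : ℕ, ENNReal.ofReal (κ'/2) ≤ μX (f ⁻¹' s ∩ Metric.closedBall x₀ n) := by
        intro s hs hms
        have hmono : Monotone (fun n : ℕ => f ⁻¹' s ∩ Metric.closedBall x₀ n) := by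
          intro i j hij
          exact inter_subset_inter_right _
            (Metric.closedBall_subset_closedBall (by exact_mod_cast hij))
        have hU : (⋃ n : ℕ, f ⁻¹' s ∩ Metric.closedBall x₀ n) = f ⁻¹' s := by
          ext x
          simp only [mem_iUnion, mem_inter_iff, Metric.mem_closedBall]
          constructor
          · rintro ⟨n, hn, -⟩; exact hn
          · intro hx
            obtain ⟨n, hn⟩ := exists_nat_ge (dist x x₀)
            exact ⟨n, hx, hn⟩
        have ht := tendsto_measure_iUnion_atTop (μ := μX) hmono
        rw [hU] at ht
        have hlt : ENNReal.ofReal (κ'/2) < μX (f ⁻¹' s) := by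
          have hms' : m s = μX (f ⁻¹' s) := Measure.map_apply hfm hs
          rw [← hms']
          exact lt_of_lt_of_le (ENNReal.ofReal_lt_ofReal_iff (by linarith) |>.mpr (by linarith)) hms
        exact (Filter.Tendsto.eventually_const_le hlt ht).exists
      obtain ⟨n₀, hn₀⟩ := hchoose (Iic a) measurableSet_Iic ha1
      obtain ⟨n₁, hn₁⟩ := hchoose (Ici b) measurableSet_Ici hb1'
      set R : ℝ := ((max n₀ n₁ : ℕ) : ℝ) with hRdef
      set B₀ : Set X := f ⁻¹' (Iic a) ∩ Metric.closedBall x₀ R with hB₀def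
      set B₁ : Set X := f ⁻¹' (Ici b) ∩ Metric.closedBall x₀ R with hB₁def
      have hB₀meas : MeasurableSet B₀ := (hfm measurableSet_Iic).inter measurableSet_closedBall
      have hB₁meas : MeasurableSet B₁ := (hfm measurableSet_Ici).inter measurableSet_closedBall
      have hB₀ge : ENNReal.ofReal (κ'/2) ≤ μX B₀ :=
        le_trans hn₀ (measure_mono (inter_subset_inter_right _
          (Metric.closedBall_subset_closedBall (by rw [hRdef]; exact_mod_cast le_max_left n₀ n₁))))
      have hB₁ge : ENNReal.ofReal (κ'/2) ≤ μX B₁ :=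
        le_trans hn₁ (measure_mono (inter_subset_inter_right _
          (Metric.closedBall_subset_closedBall (by rw [hRdef]; exact_mod_cast le_max_right n₀ n₁))))
      have hB₀pos : 0 < μX B₀ :=
        lt_of_lt_of_le (ENNReal.ofReal_pos.mpr (by linarith)) hB₀ge
      have hB₁pos : 0 < μX B₁ :=
        lt_of_lt_of_le (ENNReal.ofReal_pos.mpr (by linarith)) hB₁ge
      set ν₀ : Measure X := (μX B₀)⁻¹ • μX.restrict B₀ with hν₀def
      set ν₁ : Measure X := (μX B₁)⁻¹ • μX.restrict B₁ with hν₁def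
      obtain ⟨huniv₀, hac₀, hrn₀, hent₀, hcompl₀⟩ := my_cond_props μX hB₀meas hB₀pos hN
      obtain ⟨huniv₁, hac₁, hrn₁, hent₁, hcompl₁⟩ := my_cond_props μX hB₁meas hB₁pos hN
      haveI hprob₀ : IsProbabilityMeasure ν₀ := ⟨huniv₀⟩
      haveI hprob₁ : IsProbabilityMeasure ν₁ := ⟨huniv₁⟩
      -- second moments
      have hmem₀ : ∀ᵐ x ∂ν₀, x ∈ B₀ := by
        rw [ae_iff]
        exact hcompl₀
      have hmem₁ : ∀ᵐ x ∂ν₁, x ∈ B₁ := by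
        rw [ae_iff]
        exact hcompl₁
      have hsm : ∀ (ν : Measure X), ν univ = 1 → (∀ᵐ x ∂ν, dist x x₀ ≤ R) →
          HasFiniteSecondMoment ν := by
        intro ν hu hb
        refine ⟨x₀, ?_⟩
        calc ∫⁻ x, ENNReal.ofReal (dist x x₀) ^ 2 ∂ν
            ≤ ∫⁻ _, ENNReal.ofReal R ^ 2 ∂ν := by
              refine lintegral_mono_ae ?_
              filter_upwards [hb] with x hx
              gcongr
        _ = ENNReal.ofReal R ^ 2 * 1 := by rw [lintegral_const, hu]
        _ < ∞ := by
              rw [mul_one]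
              exact ENNReal.pow_lt_top ENNReal.ofReal_lt_top
      have hsm₀ : HasFiniteSecondMoment ν₀ :=
        hsm ν₀ huniv₀ (by filter_upwards [hmem₀] with x hx; exact hx.2)
      have hsm₁ : HasFiniteSecondMoment ν₁ :=
        hsm ν₁ huniv₁ (by filter_upwards [hmem₁] with x hx; exact hx.2)
      -- apply CD
      obtain ⟨νt, π, hνt0, hνt1, hgeo, hopt, hent⟩ :=
        hCD ν₀ ν₁ hprob₀ hprob₁ hac₀ hac₁ hsm₀ hsm₁ hent₀ hent₁
      have hcpl : IsCoupling π ν₀ ν₁ := hopt.1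
      have hπuniv : π univ = 1 := by rw [(my_coupling_univ hcpl).1, huniv₀]
      -- W2 finiteness
      have hWfin : W2 ν₀ ν₁ < ∞ := by
        have hcoup2 : IsCoupling (ν₀.prod ν₁) ν₀ ν₁ := by
          constructor
          · rw [Measure.map_fst_prod, measure_univ, one_smul]
          · rw [Measure.map_snd_prod, measure_univ, one_smul]
        have haeprod := my_coupling_ae hcoup2 hB₀meas hB₁meas hcompl₀ hcompl₁
        have hcost : cost2 (ν₀.prod ν₁) ≤ (ENNReal.ofReal (2*R) ^ 2) ^ (1/2 : ℝ) := by
          rw [cost2]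
          refine ENNReal.rpow_le_rpow ?_ (by norm_num)
          calc ∫⁻ q, ENNReal.ofReal (dist q.1 q.2) ^ 2 ∂(ν₀.prod ν₁)
              ≤ ∫⁻ _, ENNReal.ofReal (2*R) ^ 2 ∂(ν₀.prod ν₁) := by
                refine lintegral_mono_ae ?_
                filter_upwards [haeprod] with q hq
                have h1 : dist q.1 x₀ ≤ R := hq.1.2
                have h2 : dist q.2 x₀ ≤ R := hq.2.2
                have hd : dist q.1 q.2 ≤ 2*R := by
                  calc dist q.1 q.2 ≤ dist q.1 x₀ + dist x₀ q.2 := dist_triangle _ _ _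
                  _ ≤ R + R := add_le_add h1 (by rwa [dist_comm])
                  _ = 2*R := by ring
                gcongr
          _ = ENNReal.ofReal (2*R) ^ 2 := by
                rw [lintegral_const, measure_univ, mul_one]
        calc W2 ν₀ ν₁ ≤ cost2 (ν₀.prod ν₁) := by
              rw [W2]
              exact le_trans (iInf_le _ _) (iInf_le _ hcoup2)
        _ ≤ (ENNReal.ofReal (2*R) ^ 2) ^ (1/2:ℝ) := hcost
        _ < ∞ := ENNReal.rpow_lt_top_of_nonneg (by norm_num)
              (ENNReal.pow_ne_top ENNReal.ofReal_ne_top)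
      have hhalfIcc : (1/2:ℝ) ∈ Icc (0:ℝ) 1 := by constructor <;> norm_num
      have h0Icc : (0:ℝ) ∈ Icc (0:ℝ) 1 := ⟨le_refl 0, zero_le_one⟩
      have hW2half : W2 ν₀ (νt (1/2)) < ∞ := by
        have hg := hgeo 0 h0Icc (1/2) hhalfIcc
        rw [hνt0] at hg
        rw [hg]
        exact ENNReal.mul_lt_top ENNReal.ofReal_lt_top hWfin
      obtain ⟨π', hπ'⟩ := my_exists_coupling_of_W2_lt_top hW2half
      have hνhuniv : (νt (1/2)) univ = 1 := by
        rw [(my_coupling_univ hπ').2, huniv₀]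
      -- entropy inequality
      have hEnt := hent (1/2) hhalfIcc N ⟨le_refl N, hN⟩ hent₀ hent₁
      rw [show (1:ℝ) - 1/2 = 1/2 by norm_num] at hEnt
      -- a.e. distance bound
      have haeπ := my_coupling_ae hcpl hB₀meas hB₁meas hcompl₀ hcompl₁
      have hdist : ∀ᵐ q ∂π, D + ε ≤ dist q.1 q.2 := by
        filter_upwards [haeπ] with q hq
        have h1 : f q.1 ≤ a := hq.1.1
        have h2 : b ≤ f q.2 := hq.2.1
        have h3 : |f q.2 - f q.1| ≤ dist q.1 q.2 := by
          have hl := hf.dist_le_mul q.2 q.1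
          rw [Real.dist_eq, NNReal.coe_one, one_mul, dist_comm] at hl
          exact hl
        have h4 : b - a ≤ |f q.2 - f q.1| :=
          le_trans (by linarith) (le_abs_self _)
        linarith
      -- rnDeriv bounds along π
      have hrdπ : ∀ (ν : Measure X) (B : Set X), ν ≪ μX →
          (∀ᵐ x ∂μX, ν.rnDeriv μX x ≤ (μX B)⁻¹) → ∀ (proj : X × X → X),
          Measurable proj → π.map proj = ν →
          ∀ᵐ q ∂π, ν.rnDeriv μX (proj q) ≤ (μX B)⁻¹ := by
        intro ν B hac hbd proj hproj hmap
        set S : Set X := {x : X | (μX B)⁻¹ < ν.rnDeriv μX x} with hSdef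
        have hSmeas : MeasurableSet S :=
          measurableSet_lt measurable_const (Measure.measurable_rnDeriv ν μX)
        have hμS : μX S = 0 := by
          refine measure_mono_null (fun x hx => ?_) (ae_iff.mp hbd)
          exact not_le.mpr hx
        have hνS : ν S = 0 := hac hμS
        have hπS : π (proj ⁻¹' S) = 0 := by
          rw [← Measure.map_apply hproj hSmeas, hmap]
          exact hνS
        rw [ae_iff]
        refine measure_mono_null (fun q hq => ?_) hπS
        simp only [mem_setOf_eq, not_le] at hq
        exact hq
      have hrd₀ := hrdπ ν₀ B₀ hac₀ hrn₀ Prod.fst measurable_fst hcpl.1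
      have hrd₁ := hrdπ ν₁ B₁ hac₁ hrn₁ Prod.snd measurable_snd hcpl.2
      -- constants
      have hp1 : (1:ℝ) < 1 - 1/N := by linarith
      have he0 : (0:ℝ) < -(1/N) := by linarith
      set Ct : ℝ≥0∞ := ENNReal.ofReal ((1/2) * Real.cosh (c * ((1/2) * (D + ε))) ^ (-(1 - 1/N)))
        with hCtdef
      set Cd : ℝ≥0∞ := ENNReal.ofReal ((2/κ') ^ (-(1/N))) with hCddef
      have hDε : 0 < D + ε := by linarith
      have hterm : ∀ (g : X × X → ℝ≥0∞), (∀ᵐ q ∂π, g q ≤ Cd) →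
          ∫⁻ q, tauCoeff K N (1/2) (dist q.1 q.2) * g q ∂π ≤ Ct * Cd := by
        intro g hg
        calc ∫⁻ q, tauCoeff K N (1/2) (dist q.1 q.2) * g q ∂π
            ≤ ∫⁻ _, Ct * Cd ∂π := by
              refine lintegral_mono_ae ?_
              filter_upwards [hdist, hg] with q h1 h2
              exact mul_le_mul' (by rw [hCtdef]; exact my_tau_half_le hK hN hDε h1) h2
        _ = Ct * Cd * π univ := lintegral_const _
        _ = Ct * Cd := by rw [hπuniv, mul_one]
      have hinvbound : ∀ (B : Set X), ENNReal.ofReal (κ'/2) ≤ μX B →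
          ((μX B)⁻¹) ^ (-(1/N)) ≤ Cd := by
        intro B hBg
        have h1 : (μX B)⁻¹ ≤ (ENNReal.ofReal (κ'/2))⁻¹ := ENNReal.inv_le_inv' hBg
        have h2 : (ENNReal.ofReal (κ'/2))⁻¹ = ENNReal.ofReal (2/κ') := by
          rw [← ENNReal.ofReal_inv_of_pos (by linarith), inv_div]
        calc ((μX B)⁻¹) ^ (-(1/N)) ≤ (ENNReal.ofReal (2/κ')) ^ (-(1/N)) := by
              rw [← h2]
              exact ENNReal.rpow_le_rpow h1 he0.le
        _ = Cd := by
              rw [hCddef, ENNReal.ofReal_rpow_of_pos (by positivity)]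
      have hgCd₀ : ∀ᵐ q ∂π, (ν₀.rnDeriv μX q.1) ^ (-(1/N)) ≤ Cd := by
        filter_upwards [hrd₀] with q hq
        exact le_trans (ENNReal.rpow_le_rpow hq he0.le) (hinvbound B₀ hB₀ge)
      have hgCd₁ : ∀ᵐ q ∂π, (ν₁.rnDeriv μX q.2) ^ (-(1/N)) ≤ Cd := by
        filter_upwards [hrd₁] with q hq
        exact le_trans (ENNReal.rpow_le_rpow hq he0.le) (hinvbound B₁ hB₁ge)
      have hsum : renyiEntropy N μX (νt (1/2)) ≤ Ct * Cd + Ct * Cd :=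
        le_trans hEnt (add_le_add (hterm _ hgCd₀) (hterm _ hgCd₁))
      have hlow : 1 ≤ renyiEntropy N μX (νt (1/2)) := my_one_le_renyi μX _ hνhuniv hN
      -- final numeric contradiction
      have hcD : c * ((1/2)*D) = acosh M := by
        have hsq : c * Real.sqrt ((1-N)/K) = 1 := by
          rw [hcdef, ← Real.sqrt_mul (le_of_lt (div_pos hK hNpos)),
            show K/(1-N) * ((1-N)/K) = 1 by field_simp]
          exact Real.sqrt_one
        rw [hDdef]
        calc c * ((1/2) * (2 * Real.sqrt ((1-N)/K) * acosh M))
            = (c * Real.sqrt ((1-N)/K)) * acosh M := by ring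
        _ = acosh M := by rw [hsq, one_mul]
      have hcoshD : Real.cosh (c * ((1/2)*D)) = M := by
        rw [hcD]; exact my_cosh_acosh hM1.le
      have hsplit : c * ((1/2)*(D+ε)) = c * ((1/2)*D) + c * ((1/2)*ε) := by ring
      have hME : M * E ≤ Real.cosh (c * ((1/2)*(D+ε))) := by
        rw [hsplit, Real.cosh_add, hcoshD, ← hEdef]
        have hs1 : 0 ≤ Real.sinh (c * ((1/2)*D)) :=
          Real.sinh_nonneg_iff.mpr (by positivity)
        have hs2 : 0 ≤ Real.sinh (c * ((1/2)*ε)) :=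
          Real.sinh_nonneg_iff.mpr (by positivity)
        nlinarith
      have hnum := my_final_numeric (co := Real.cosh (c * ((1/2) * (D + ε))))
        hN hκ0 hκ'pos hE1 hκκ' h2κ (by rw [← hMdef]; exact hME)
      have hw : (0:ℝ) ≤ (2/κ') ^ (-(1/N):ℝ) := Real.rpow_nonneg (by positivity) _
      have hu : (0:ℝ) ≤ (1/2) * Real.cosh (c*((1/2)*(D+ε))) ^ (-(1 - 1/N)) :=
        mul_nonneg (by norm_num) (Real.rpow_nonneg (Real.cosh_pos _).le _)
      have hCtCd : Ct * Cd = ENNReal.ofReal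
          ((1/2) * Real.cosh (c*((1/2)*(D+ε))) ^ (-(1 - 1/N)) * ((2/κ') ^ (-(1/N)))) := by
        rw [hCtdef, hCddef]
        rw [← ENNReal.ofReal_mul hu]
      have hlt1 : Ct * Cd + Ct * Cd < 1 := by
        rw [hCtCd, ← ENNReal.ofReal_add (mul_nonneg hu hw) (mul_nonneg hu hw)]
        exact ENNReal.ofReal_lt_one.mpr hnum
      exact absurd (lt_of_le_of_lt (le_trans hlow hsum) hlt1) (lt_irrefl _)
    by_cases hab : a ≤ b
    · rw [Real.diam_Icc hab]
      exact ⟨Metric.isBounded_Icc a b, hcrux⟩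
    · rw [Set.Icc_eq_empty hab, Metric.diam_empty]
      exact ⟨Bornology.isBounded_empty, by linarith⟩
end

section
/- Let N' < 0 and let X be a complete separable metric space. If μ_n, ν_n, μ, ν are Borel probability measures on X with μ_n → μ and ν_n → ν weakly, then S_{N',μ}(ν) ≤ liminf_{n→∞} S_{N',μ_n}(ν_n), where the entropies take values in [1,∞]. In other words, the Rényi entropy S_{N',·}(·) : P(X) × P(X) → [1,∞] is jointly lower semicontinuous with respect to the weak convergence topology. -/
open MeasureTheory ENNReal Filter Topology Set

/-! Write `p = 1 - 1/N' > 1` and `q` for its conjugate exponent. Young's inequality gives, for every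
`g ≥ 0`, the dual bound `p ∫ g dν ≤ S_{N',μ}(ν) + (p - 1) ∫ g^q dμ`, with equality at `g = ρ^(p-1)`.
For bounded continuous `g` both integrals pass to weak limits, so `L = liminf S_{N',μₙ}(νₙ)` obeys
the same bound; by density of `C_b` in `L¹(μ + ν)` it extends to bounded Borel `g`. Testing it on
multiples of the indicator of a `μ`-null set forces `ν ≪ μ`, and testing it on the truncations
`g = min(ρ, M)^(p-1)` gives `∫ min(ρ, M)^p dμ ≤ L`; let `M → ∞`. -/

open scoped NNReal BoundedContinuousFunction

theorem ENNReal.young_inequality_scaled {p q : ℝ} (hpq : p.HolderConjugate q) (x y : ℝ≥0∞) :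
    ENNReal.ofReal p * (x * y) ≤ x ^ p + ENNReal.ofReal (p - 1) * y ^ q := by
  have hp : ENNReal.ofReal p ≠ 0 := (ENNReal.ofReal_pos.2 hpq.pos).ne'
  calc ENNReal.ofReal p * (x * y)
      ≤ ENNReal.ofReal p * (x ^ p / ENNReal.ofReal p + y ^ q / ENNReal.ofReal q) :=
        mul_le_mul_right (ENNReal.young_inequality x y hpq) _
    _ = x ^ p + ENNReal.ofReal (p - 1) * y ^ q := by
        rw [mul_add, ENNReal.mul_div_cancel hp ofReal_ne_top, ← hpq.div_conj_eq_sub_one,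
          ENNReal.ofReal_div_of_pos hpq.symm.pos, div_eq_mul_inv, div_eq_mul_inv]
        ring

theorem Real.rpow_le_rpow_add_mul_abs_sub {q C x y : ℝ} (hq : 1 ≤ q) (hx : x ∈ Icc 0 C)
    (hy : y ∈ Icc 0 C) : x ^ q ≤ y ^ q + q * C ^ (q - 1) * |x - y| := by
  have hderiv : ∀ z ∈ Icc 0 C, ‖q * z ^ (q - 1)‖ ≤ q * C ^ (q - 1) := fun z hz => by
    rw [Real.norm_eq_abs, abs_of_nonneg (by have := hz.1; positivity)]
    exact mul_le_mul_of_nonneg_left (Real.rpow_le_rpow hz.1 hz.2 (by linarith)) (by linarith)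
  have hmvt := (convex_Icc 0 C).norm_image_sub_le_of_norm_hasDerivWithin_le
    (fun z _ => (Real.hasDerivAt_rpow_const (Or.inr hq)).hasDerivWithinAt) hderiv hy hx
  rw [Real.norm_eq_abs, Real.norm_eq_abs] at hmvt
  linarith [le_abs_self (x ^ q - y ^ q)]

theorem ENNReal.le_liminf_add_of_le_add {ι : Type*} {l : Filter ι} [l.NeBot] {a s b : ι → ℝ≥0∞}
    {A B : ℝ≥0∞} (ha : Tendsto a l (𝓝 A)) (hb : Tendsto b l (𝓝 B)) (hB : B ≠ ∞)
    (h : ∀ i, a i ≤ s i + b i) : A ≤ liminf s l + B := by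
  have hb' : Tendsto (fun i => b i - B) l (𝓝 0) := by
    simpa using ENNReal.Tendsto.sub hb tendsto_const_nhds (Or.inr hB)
  calc A = liminf a l := ha.liminf_eq.symm
    _ ≤ liminf (fun i => (s i + (b i - B)) + B) l :=
        liminf_le_liminf (Eventually.of_forall fun i =>
          (h i).trans (by rw [add_assoc]; exact add_le_add_right le_tsub_add _))
    _ = liminf s l + B := by
        rw [liminf_add_const l _ B (by isBoundedDefault) (by isBoundedDefault)]
        exact congrArg (· + B) (liminf_add_of_right_tendsto_zero hb' s)

theorem exists_boundedContinuous_mem_Icc_lintegral_sub_le {X : Type*} [PseudoMetricSpace X]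
    [MeasurableSpace X] [BorelSpace X] (m : Measure X) [IsFiniteMeasure m] {f : X → ℝ}
    (hf : Measurable f) {C : ℝ≥0} (hfC : ∀ x, f x ∈ Icc 0 (C : ℝ)) {δ : ℝ≥0∞} (hδ : δ ≠ 0) :
    ∃ h : X →ᵇ ℝ, (∀ x, h x ∈ Icc 0 (C : ℝ)) ∧ ∫⁻ x, ENNReal.ofReal |f x - h x| ∂m ≤ δ := by
  have hfi : Integrable f m := .of_bound hf.aestronglyMeasurable C <| ae_of_all _ fun x => by
    rw [Real.norm_eq_abs, abs_of_nonneg (hfC x).1]; exact (hfC x).2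
  obtain ⟨h, hh, -⟩ := hfi.exists_boundedContinuous_lintegral_sub_le hδ
  let clamp : ℝ → ℝ := fun y => max 0 (min y C)
  have hclamp : LipschitzWith 1 clamp := (LipschitzWith.id.min_const C).const_max 0
  refine ⟨h.comp clamp hclamp, fun x => ⟨le_max_left _ _, max_le C.2 (min_le_right _ _)⟩, ?_⟩
  refine le_trans (lintegral_mono fun x => ?_) hh
  have hfix : clamp (f x) = f x := by simp [clamp, (hfC x).1, (hfC x).2]
  have hdist := hclamp.dist_le_mul (f x) (h x)
  rw [hfix, NNReal.coe_one, one_mul, Real.dist_eq, Real.dist_eq] at hdist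
  rw [Real.enorm_eq_ofReal_abs]
  exact ENNReal.ofReal_le_ofReal hdist

theorem WeakConv.tendsto_lintegral_ofReal {X : Type*} [TopologicalSpace X] [MeasurableSpace X]
    [OpensMeasurableSpace X] {μs : ℕ → Measure X} {μ : Measure X}
    (hμs : ∀ n, IsFiniteMeasure (μs n)) [IsFiniteMeasure μ] (hw : WeakConv μs μ) {f : X →ᵇ ℝ}
    (hf : ∀ x, 0 ≤ f x) :
    Tendsto (fun n => ∫⁻ x, ENNReal.ofReal (f x) ∂μs n) atTop
      (𝓝 (∫⁻ x, ENNReal.ofReal (f x) ∂μ)) := by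
  have key : ∀ (m : Measure X) [IsFiniteMeasure m],
      ∫⁻ x, ENNReal.ofReal (f x) ∂m = ENNReal.ofReal (∫ x, f x ∂m) := fun m _ =>
    (ofReal_integral_eq_lintegral_ofReal (f.integrable m) (ae_of_all _ hf)).symm
  simp_rw [fun n => @key (μs n) (hμs n), key μ]
  exact (ENNReal.continuous_ofReal.tendsto _).comp (hw f)

theorem ofReal_mul_lintegral_le_renyiEntropy_add {X : Type*} [MeasurableSpace X] {N' p q : ℝ}
    (hp : p = 1 - 1 / N') (hpq : p.HolderConjugate q) (μ ν : Measure X) [SigmaFinite μ]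
    [SigmaFinite ν] {g : X → ℝ≥0∞} (hg : Measurable g) :
    ENNReal.ofReal p * ∫⁻ x, g x ∂ν ≤
      renyiEntropy N' μ ν + ENNReal.ofReal (p - 1) * ∫⁻ x, g x ^ q ∂μ := by
  by_cases hνμ : ν ≪ μ
  · rw [renyiEntropy, if_pos hνμ, ← hp]
    calc ENNReal.ofReal p * ∫⁻ x, g x ∂ν
        = ∫⁻ x, ENNReal.ofReal p * (ν.rnDeriv μ x * g x) ∂μ := by
          rw [← lintegral_rnDeriv_mul hνμ hg.aemeasurable, lintegral_const_mul' _ _ ofReal_ne_top]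
      _ ≤ ∫⁻ x, (ν.rnDeriv μ x ^ p + ENNReal.ofReal (p - 1) * g x ^ q) ∂μ :=
          lintegral_mono fun x => ENNReal.young_inequality_scaled hpq _ _
      _ = _ := by rw [lintegral_add_left (by fun_prop), lintegral_const_mul' _ _ ofReal_ne_top]
  · simp [renyiEntropy, hνμ]

theorem ofReal_mul_lintegral_le_liminf_renyiEntropy_add {X : Type*} [TopologicalSpace X]
    [MeasurableSpace X] [OpensMeasurableSpace X] {N' p q : ℝ} (hp : p = 1 - 1 / N')
    (hpq : p.HolderConjugate q) {μs νs : ℕ → Measure X} {μ ν : Measure X}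
    (hμs : ∀ n, IsFiniteMeasure (μs n)) (hνs : ∀ n, IsFiniteMeasure (νs n)) [IsFiniteMeasure μ]
    [IsFiniteMeasure ν] (hμw : WeakConv μs μ) (hνw : WeakConv νs ν) (h : X →ᵇ ℝ)
    (h0 : ∀ x, 0 ≤ h x) :
    ENNReal.ofReal p * ∫⁻ x, ENNReal.ofReal (h x) ∂ν ≤
      liminf (fun n => renyiEntropy N' (μs n) (νs n)) atTop
        + ENNReal.ofReal (p - 1) * ∫⁻ x, ENNReal.ofReal (h x) ^ q ∂μ := by
  have hq : 0 < q := hpq.symm.pos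
  let hPow : X →ᵇ ℝ := .ofNormedAddCommGroup (fun x => h x ^ q)
    (h.continuous.rpow_const fun _ => Or.inr hq.le) (‖h‖ ^ q) fun x => by
      rw [Real.norm_eq_abs, abs_of_nonneg (Real.rpow_nonneg (h0 x) _)]
      exact Real.rpow_le_rpow (h0 x) ((le_abs_self _).trans (h.norm_coe_le_norm x)) hq.le
  have hPow_eq : ∀ x, ENNReal.ofReal (h x) ^ q = ENNReal.ofReal (hPow x) := fun x =>
    ENNReal.ofReal_rpow_of_nonneg (h0 x) hq.le
  simp_rw [hPow_eq]
  refine ENNReal.le_liminf_add_of_le_add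
    (ENNReal.Tendsto.const_mul (hνw.tendsto_lintegral_ofReal hνs h0) (Or.inr ofReal_ne_top))
    (ENNReal.Tendsto.const_mul
      (hμw.tendsto_lintegral_ofReal hμs fun x => Real.rpow_nonneg (h0 x) q) (Or.inr ofReal_ne_top))
    (ENNReal.mul_ne_top ofReal_ne_top (hPow.integrable μ).lintegral_lt_top.ne) fun n => ?_
  have := hμs n
  have := hνs n
  simpa only [hPow_eq] using
    ofReal_mul_lintegral_le_renyiEntropy_add hp hpq (μs n) (νs n)
      (g := fun x => ENNReal.ofReal (h x)) (by fun_prop)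

theorem ofReal_mul_lintegral_le_add_of_lintegral_abs_sub_le {X : Type*} [MeasurableSpace X]
    {p q : ℝ} (hpq : p.HolderConjugate q) {μ ν : Measure X} {L δ : ℝ≥0∞} {C : ℝ≥0}
    {f h : X → ℝ} (hf : Measurable f) (hh : Measurable h) (hfC : ∀ x, f x ∈ Icc 0 (C : ℝ))
    (hhC : ∀ x, h x ∈ Icc 0 (C : ℝ)) (hfh : ∫⁻ x, ENNReal.ofReal |f x - h x| ∂(μ + ν) ≤ δ)
    (hL : ENNReal.ofReal p * ∫⁻ x, ENNReal.ofReal (h x) ∂ν ≤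
      L + ENNReal.ofReal (p - 1) * ∫⁻ x, ENNReal.ofReal (h x) ^ q ∂μ) :
    ENNReal.ofReal p * ∫⁻ x, ENNReal.ofReal (f x) ∂ν ≤
      L + ENNReal.ofReal (p - 1) * ∫⁻ x, ENNReal.ofReal (f x) ^ q ∂μ
        + (ENNReal.ofReal p + ENNReal.ofReal (p - 1) * ENNReal.ofReal (q * C ^ (q - 1))) * δ := by
  have hq : 1 ≤ q := hpq.symm.lt.le
  set K : ℝ := q * C ^ (q - 1)
  set e : X → ℝ≥0∞ := fun x => ENNReal.ofReal |f x - h x|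
  have he : ∀ m ≤ μ + ν, ∫⁻ x, e x ∂m ≤ δ := fun m hm => (lintegral_mono' hm le_rfl).trans hfh
  have hf_le : ∀ x, ENNReal.ofReal (f x) ≤ ENNReal.ofReal (h x) + e x := fun x => by
    rw [← ENNReal.ofReal_add (hhC x).1 (abs_nonneg _)]
    exact ENNReal.ofReal_le_ofReal (by linarith [le_abs_self (f x - h x)])
  have hh_le : ∀ x, ENNReal.ofReal (h x) ^ q ≤ ENNReal.ofReal (f x) ^ q + ENNReal.ofReal K * e x :=
    fun x => by
      rw [ENNReal.ofReal_rpow_of_nonneg (hhC x).1 (by linarith),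
        ENNReal.ofReal_rpow_of_nonneg (hfC x).1 (by linarith), ← ENNReal.ofReal_mul (by positivity),
        ← ENNReal.ofReal_add (by have := (hfC x).1; positivity) (by positivity), abs_sub_comm]
      exact ENNReal.ofReal_le_ofReal (Real.rpow_le_rpow_add_mul_abs_sub hq (hhC x) (hfC x))
  calc ENNReal.ofReal p * ∫⁻ x, ENNReal.ofReal (f x) ∂ν
      ≤ ENNReal.ofReal p * (∫⁻ x, ENNReal.ofReal (h x) ∂ν + δ) := by
        gcongr
        calc ∫⁻ x, ENNReal.ofReal (f x) ∂ν ≤ ∫⁻ x, ENNReal.ofReal (h x) + e x ∂ν :=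
              lintegral_mono hf_le
          _ ≤ ∫⁻ x, ENNReal.ofReal (h x) ∂ν + δ := by
            rw [lintegral_add_left (by fun_prop)]
            gcongr
            exact he ν (Measure.le_add_left le_rfl)
    _ ≤ L + ENNReal.ofReal (p - 1) * ∫⁻ x, ENNReal.ofReal (h x) ^ q ∂μ
          + ENNReal.ofReal p * δ := by
        rw [mul_add]
        gcongr
    _ ≤ L + ENNReal.ofReal (p - 1) * (∫⁻ x, ENNReal.ofReal (f x) ^ q ∂μ + ENNReal.ofReal K * δ)
          + ENNReal.ofReal p * δ := by
        gcongr
        calc ∫⁻ x, ENNReal.ofReal (h x) ^ q ∂μ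
            ≤ ∫⁻ x, ENNReal.ofReal (f x) ^ q + ENNReal.ofReal K * e x ∂μ := lintegral_mono hh_le
          _ ≤ ∫⁻ x, ENNReal.ofReal (f x) ^ q ∂μ + ENNReal.ofReal K * δ := by
            rw [lintegral_add_right _ (by fun_prop), lintegral_const_mul' _ _ ofReal_ne_top]
            gcongr
            exact he μ (Measure.le_add_right le_rfl)
    _ = _ := by ring

theorem ofReal_mul_lintegral_le_add_of_forall_boundedContinuous {X : Type*}
    [PseudoMetricSpace X] [MeasurableSpace X] [BorelSpace X] {p q : ℝ}
    (hpq : p.HolderConjugate q) {μ ν : Measure X} [IsFiniteMeasure μ] [IsFiniteMeasure ν]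
    {L : ℝ≥0∞}
    (hL : ∀ h : X →ᵇ ℝ, (∀ x, 0 ≤ h x) → ENNReal.ofReal p * ∫⁻ x, ENNReal.ofReal (h x) ∂ν ≤
      L + ENNReal.ofReal (p - 1) * ∫⁻ x, ENNReal.ofReal (h x) ^ q ∂μ)
    {C : ℝ≥0} {g : X → ℝ≥0∞} (hg : Measurable g) (hgC : ∀ x, g x ≤ C) :
    ENNReal.ofReal p * ∫⁻ x, g x ∂ν ≤ L + ENNReal.ofReal (p - 1) * ∫⁻ x, g x ^ q ∂μ := by
  set f : X → ℝ := fun x => (g x).toReal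
  have hf : Measurable f := hg.ennreal_toReal
  have hfg : ∀ x, ENNReal.ofReal (f x) = g x := fun x =>
    ENNReal.ofReal_toReal (ne_top_of_le_ne_top coe_ne_top (hgC x))
  have hfC : ∀ x, f x ∈ Icc 0 (C : ℝ) := fun x =>
    ⟨toReal_nonneg, ENNReal.toReal_le_of_le_ofReal C.2 (by simpa using hgC x)⟩
  set D := ENNReal.ofReal p + ENNReal.ofReal (p - 1) * ENNReal.ofReal (q * C ^ (q - 1))
  have hδ : ∀ n : ℕ, ENNReal.ofReal p * ∫⁻ x, g x ∂ν ≤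
      L + ENNReal.ofReal (p - 1) * ∫⁻ x, g x ^ q ∂μ + D * (n : ℝ≥0∞)⁻¹ := fun n => by
    obtain ⟨h, hhC, hfh⟩ := exists_boundedContinuous_mem_Icc_lintegral_sub_le (μ + ν) hf hfC
      (ENNReal.inv_ne_zero.2 (natCast_ne_top n))
    simpa only [hfg] using ofReal_mul_lintegral_le_add_of_lintegral_abs_sub_le hpq
      hf h.continuous.measurable hfC hhC hfh (hL h fun x => (hhC x).1)
  have hD : Tendsto (fun n : ℕ => D * (n : ℝ≥0∞)⁻¹) atTop (𝓝 0) := by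
    simpa using ENNReal.Tendsto.const_mul ENNReal.tendsto_inv_nat_nhds_zero
      (Or.inr (by finiteness))
  simpa using ge_of_tendsto' (tendsto_const_nhds.add hD) hδ

section DualBound

variable {X : Type*} [MeasurableSpace X] {p q : ℝ} {μ ν : Measure X} {L : ℝ≥0∞}

theorem absolutelyContinuous_of_forall_ofReal_mul_lintegral_le (hpq : p.HolderConjugate q)
    (hL_ne : L ≠ ∞)
    (hL : ∀ (C : ℝ≥0) (g : X → ℝ≥0∞), Measurable g → (∀ x, g x ≤ C) →
      ENNReal.ofReal p * ∫⁻ x, g x ∂ν ≤ L + ENNReal.ofReal (p - 1) * ∫⁻ x, g x ^ q ∂μ) :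
    ν ≪ μ := by
  refine Measure.AbsolutelyContinuous.mk fun t ht hμt => ?_
  by_contra hνt
  obtain ⟨n, hn⟩ := ENNReal.exists_nat_mul_gt hνt hL_ne
  have hbound := hL n (t.indicator fun _ => n) (measurable_const.indicator ht) fun x => by
    by_cases hx : x ∈ t <;> simp [hx]
  have hpow : (fun x => t.indicator (fun _ => (n : ℝ≥0∞)) x ^ q) =
      t.indicator fun _ => (n : ℝ≥0∞) ^ q := by
    funext x
    by_cases hx : x ∈ t <;> simp [hx, hpq.symm.pos]
  rw [hpow, lintegral_indicator ht, lintegral_indicator ht, setLIntegral_measure_zero _ _ hμt,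
    mul_zero, add_zero, setLIntegral_const] at hbound
  exact (hn.trans_le (le_mul_of_one_le_left' (ENNReal.one_le_ofReal.2 hpq.lt.le))).not_ge hbound

theorem lintegral_min_rnDeriv_rpow_le_of_forall_ofReal_mul_lintegral_le [IsFiniteMeasure μ]
    [SigmaFinite ν] (hpq : p.HolderConjugate q) (hνμ : ν ≪ μ)
    (hL : ∀ (C : ℝ≥0) (g : X → ℝ≥0∞), Measurable g → (∀ x, g x ≤ C) →
      ENNReal.ofReal p * ∫⁻ x, g x ∂ν ≤ L + ENNReal.ofReal (p - 1) * ∫⁻ x, g x ^ q ∂μ)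
    (M : ℝ≥0) : ∫⁻ x, min (ν.rnDeriv μ x) M ^ p ∂μ ≤ L := by
  set ρ := ν.rnDeriv μ
  have hp1 : 0 < p - 1 := sub_pos.2 hpq.lt
  set T := ∫⁻ x, min (ρ x) M ^ p ∂μ
  have hT : T ≠ ∞ := by
    refine ne_top_of_le_ne_top (?_ : ∫⁻ _, (M : ℝ≥0∞) ^ p ∂μ ≠ ∞) ?_
    · rw [lintegral_const]
      exact mul_ne_top (rpow_ne_top_of_nonneg hpq.nonneg coe_ne_top) (measure_ne_top _ _)
    · exact lintegral_mono fun x => ENNReal.rpow_le_rpow (min_le_right _ _) hpq.nonneg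
  -- Test the bound against `g = min ρ M ^ (p - 1)`, for which `g ^ q = min ρ M ^ p`.
  have hg := hL (M ^ (p - 1)) (fun x => min (ρ x) M ^ (p - 1)) (by fun_prop) fun x => by
    rw [ENNReal.coe_rpow_of_nonneg _ hp1.le]
    exact ENNReal.rpow_le_rpow (min_le_right _ _) hp1.le
  have hgq : ∫⁻ x, (min (ρ x) M ^ (p - 1)) ^ q ∂μ = T := by
    simp_rw [← ENNReal.rpow_mul, hpq.sub_one_mul_conj]
    rfl
  have hTν : T ≤ ∫⁻ x, min (ρ x) M ^ (p - 1) ∂ν := by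
    rw [← lintegral_rnDeriv_mul hνμ (by fun_prop)]
    refine lintegral_mono fun x => ?_
    calc min (ρ x) M ^ p = min (ρ x) M ^ (1 + (p - 1)) := by ring_nf
      _ = min (ρ x) M * min (ρ x) M ^ (p - 1) := by
        rw [ENNReal.rpow_add_of_nonneg _ _ zero_le_one hp1.le, ENNReal.rpow_one]
      _ ≤ ρ x * min (ρ x) M ^ (p - 1) := by gcongr; exact min_le_left _ _
  have hsplit : ENNReal.ofReal p * T = ENNReal.ofReal (p - 1) * T + T := by
    rw [← add_one_mul, ← ENNReal.ofReal_one, ← ENNReal.ofReal_add hp1.le zero_le_one,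
      sub_add_cancel]
  have := (mul_le_mul_right hTν _).trans hg
  rw [hgq, hsplit, add_comm L] at this
  exact (ENNReal.add_le_add_iff_left (by finiteness)).1 this

theorem lintegral_rnDeriv_rpow_le_of_forall_ofReal_mul_lintegral_le [IsFiniteMeasure μ]
    [SigmaFinite ν] (hpq : p.HolderConjugate q) (hνμ : ν ≪ μ)
    (hL : ∀ (C : ℝ≥0) (g : X → ℝ≥0∞), Measurable g → (∀ x, g x ≤ C) →
      ENNReal.ofReal p * ∫⁻ x, g x ∂ν ≤ L + ENNReal.ofReal (p - 1) * ∫⁻ x, g x ^ q ∂μ) :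
    ∫⁻ x, ν.rnDeriv μ x ^ p ∂μ ≤ L := by
  refine le_of_tendsto' (lintegral_tendsto_of_tendsto_of_monotone (fun n : ℕ => by fun_prop)
    (ae_of_all _ fun x m n hmn => ?_) (ae_of_all _ fun x => ?_))
    fun n => lintegral_min_rnDeriv_rpow_le_of_forall_ofReal_mul_lintegral_le hpq hνμ hL n
  · exact ENNReal.rpow_le_rpow (min_le_min le_rfl (by simpa using hmn)) hpq.nonneg
  · refine ((ENNReal.continuous_rpow_const).tendsto _).comp ?_
    simpa using tendsto_const_nhds.min ENNReal.tendsto_nat_nhds_top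

theorem renyiEntropy_le_of_forall_ofReal_mul_lintegral_le {N' : ℝ} [IsFiniteMeasure μ]
    [SigmaFinite ν] (hp : p = 1 - 1 / N') (hpq : p.HolderConjugate q) (hL_ne : L ≠ ∞)
    (hL : ∀ (C : ℝ≥0) (g : X → ℝ≥0∞), Measurable g → (∀ x, g x ≤ C) →
      ENNReal.ofReal p * ∫⁻ x, g x ∂ν ≤ L + ENNReal.ofReal (p - 1) * ∫⁻ x, g x ^ q ∂μ) :
    renyiEntropy N' μ ν ≤ L := by
  have hνμ := absolutelyContinuous_of_forall_ofReal_mul_lintegral_le hpq hL_ne hL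
  rw [renyiEntropy, if_pos hνμ, ← hp]
  exact lintegral_rnDeriv_rpow_le_of_forall_ofReal_mul_lintegral_le hpq hνμ hL

end DualBound

open MeasureTheory Filter Set in
theorem renyiEntropy_lsc_general {X : Type*} [MetricSpace X] [MeasurableSpace X] [BorelSpace X]
    (N' : ℝ) (hN' : N' < 0)
    (μs νs : ℕ → Measure X) (μ ν : Measure X)
    (hμs : ∀ n, IsProbabilityMeasure (μs n)) (hνs : ∀ n, IsProbabilityMeasure (νs n))
    [IsProbabilityMeasure μ] [IsProbabilityMeasure ν]
    (hμw : WeakConv μs μ) (hνw : WeakConv νs ν) :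
    renyiEntropy N' μ ν ≤ liminf (fun n => renyiEntropy N' (μs n) (νs n)) atTop := by
  set p := 1 - 1 / N' with hp
  have hp1 : 1 < p := by linarith [one_div_neg.2 hN']
  have hpq : p.HolderConjugate (Real.conjExponent p) := .conjExponent hp1
  set L := liminf (fun n => renyiEntropy N' (μs n) (νs n)) atTop
  rcases eq_or_ne L ∞ with hL | hL
  · exact hL ▸ le_top
  refine renyiEntropy_le_of_forall_ofReal_mul_lintegral_le hp hpq hL fun C g hg hgC => ?_
  refine ofReal_mul_lintegral_le_add_of_forall_boundedContinuous hpq (fun h h0 => ?_) hg hgC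
  exact ofReal_mul_lintegral_le_liminf_renyiEntropy_add hp hpq (fun n => inferInstance)
    (fun n => inferInstance) hμw hνw h h0

open MeasureTheory Filter Set in
/-- Joint lower semicontinuity of the Rényi entropy (`N' < 0`) with respect to
weak convergence. -/
theorem renyiEntropy_lsc {X : Type*} [MetricSpace X] [CompleteSpace X]
    [TopologicalSpace.SeparableSpace X] [MeasurableSpace X] [BorelSpace X]
    (N' : ℝ) (hN' : N' < 0)
    (μs νs : ℕ → Measure X) (μ ν : Measure X)
    (hμs : ∀ n, IsProbabilityMeasure (μs n)) (hνs : ∀ n, IsProbabilityMeasure (νs n))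
    [IsProbabilityMeasure μ] [IsProbabilityMeasure ν]
    (hμw : WeakConv μs μ) (hνw : WeakConv νs ν) :
    renyiEntropy N' μ ν ≤ liminf (fun n => renyiEntropy N' (μs n) (νs n)) atTop :=
  renyiEntropy_lsc_general N' hN' μs νs μ ν hμs hνs hμw hνw
end
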